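/- arXiv:2202.03993 — 8 statements merged into one kernel-verified Lean document; each statement's English description precedes it below -/
import Mathlib

section
/- Let T be a tree with q edges (hence p = q+1 vertices) and bipartition (X, Y) with |X| = s, admitting a set-ordered graceful labeling f. Then the set of vertex labels on X is exactly {0, 1, ..., s−1} and the set of vertex labels on Y is exactly {s, s+1, ..., q}. -/
/-!
The tree has `q + 1` vertices, so the injective labeling `f` into `{0, …, q}` is onto.
Hence `f '' X` and `f '' Y` split `{0, …, q}` into two blocks with every label of the
first below every label of the second: the first block is an initial segment of `ℕ`,
so it is `{0, …, |X| - 1}`, and the second block is what remains.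
-/

/-- `(X, Y)` is a bipartition of the graph `G`. -/
def IsBipartitionOf {V : Type*} (G : SimpleGraph V) (X Y : Set V) : Prop :=
  X ∪ Y = Set.univ ∧ Disjoint X Y ∧
    ∀ u v, G.Adj u v → (u ∈ X ∧ v ∈ Y) ∨ (u ∈ Y ∧ v ∈ X)

/-- `f` is a set-ordered graceful labeling of the graph `G` with `q` edges and
bipartition `(X, Y)`: `f` is injective into `{0,…,q}`, the induced edge labels
`|f u − f v|` form exactly `{1,…,q}`, and every label on `X` is smaller than every
label on `Y`. -/
def IsSetOrderedGraceful {V : Type*} (G : SimpleGraph V) (q : ℕ) (X Y : Set V)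
    (f : V → ℕ) : Prop :=
  Function.Injective f ∧ (∀ v, f v ≤ q) ∧
    {n : ℕ | ∃ u v, G.Adj u v ∧ Nat.dist (f u) (f v) = n} = Set.Icc 1 q ∧
    ∀ x ∈ X, ∀ y ∈ Y, f x < f y

open Set

theorem SimpleGraph.IsTree.card_eq_ncard_edgeSet_add_one {V : Type*} [Fintype V]
    {T : SimpleGraph V} (hT : T.IsTree) : Fintype.card V = T.edgeSet.ncard + 1 := by
  classical
  rw [← hT.card_edgeFinset, ← T.coe_edgeFinset, ncard_coe_finset]

theorem Set.range_eq_Iic_of_injective_of_card_eq {V : Type*} [Fintype V] {f : V → ℕ}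
    {q : ℕ} (hinj : Function.Injective f) (hle : ∀ v, f v ≤ q)
    (hcard : Fintype.card V = q + 1) : range f = Iic q := by
  refine eq_of_subset_of_ncard_le (range_subset_iff.2 hle) ?_ (finite_Iic q)
  rw [← image_univ, ncard_image_of_injective _ hinj, ncard_univ, Nat.card_eq_fintype_card,
    hcard, ncard_Iic_nat]

theorem IsLowerSet.eq_Iio_ncard_of_finite {A : Set ℕ} (hA : IsLowerSet A) (hfin : A.Finite) :
    A = Iio A.ncard := by
  obtain rfl | ⟨a, rfl⟩ := hA.eq_univ_or_Iio
  · exact absurd hfin infinite_univ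
  · rw [ncard_Iio_nat]

theorem Set.eq_Iio_ncard_and_eq_Icc_of_union_eq_Iic {A B : Set ℕ} {q : ℕ}
    (hAB : A ∪ B = Iic q) (hlt : ∀ a ∈ A, ∀ b ∈ B, a < b) :
    A = Iio A.ncard ∧ B = Icc A.ncard q := by
  have hA_lower : IsLowerSet A := by
    intro a b hba ha
    have haq : a ∈ Iic q := hAB ▸ Or.inl ha
    have hb : b ∈ A ∪ B := hAB ▸ (show b ≤ q from hba.trans haq)
    exact hb.resolve_right fun hb' => (hlt a ha b hb').not_ge hba
  have hA : A = Iio A.ncard :=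
    hA_lower.eq_Iio_ncard_of_finite ((finite_Iic q).subset (hAB ▸ subset_union_left))
  refine ⟨hA, ?_⟩
  ext n
  constructor
  · intro hn
    refine ⟨not_lt.1 fun hns => ?_, show n ∈ Iic q from hAB ▸ Or.inr hn⟩
    exact (hlt n (hA ▸ hns) n hn).false
  · intro ⟨hsn, hnq⟩
    have hn : n ∈ A ∪ B := hAB ▸ hnq
    exact hn.resolve_left fun hnA => (hA ▸ hnA : n ∈ Iio A.ncard).not_ge hsn

/-- for a tree `T` with `q` edges, bipartition `(X,Y)` with `|X| = s`, and a
set-ordered graceful labeling `f`, the labels on `X` are exactly `{0,…,s-1}` and the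
labels on `Y` are exactly `{s,…,q}`. -/
theorem setOrderedGraceful_vertex_labels {V : Type*} [Fintype V]
    (T : SimpleGraph V) (hT : T.IsTree) (q : ℕ) (hq : T.edgeSet.ncard = q)
    (X Y : Set V) (hXY : IsBipartitionOf T X Y)
    (f : V → ℕ) (hf : IsSetOrderedGraceful T q X Y f) :
    f '' X = Set.Iio X.ncard ∧ f '' Y = Set.Icc X.ncard q := by
  obtain ⟨hinj, hle, -, hlt⟩ := hf
  have hrange : range f = Iic q :=
    range_eq_Iic_of_injective_of_card_eq hinj hle (hq ▸ hT.card_eq_ncard_edgeSet_add_one)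
  have hunion : f '' X ∪ f '' Y = Iic q := by
    rw [← image_union, hXY.1, image_univ, hrange]
  have hlabels := eq_Iio_ncard_and_eq_Icc_of_union_eq_Iic hunion
    (forall_mem_image.2 fun x hx => forall_mem_image.2 fun y hy => hlt x hx y hy)
  rwa [ncard_image_of_injective X hinj] at hlabels
end

section
/- Let G be a connected bipartite graph with q edges and bipartition (X, Y) admitting a set-ordered graceful labeling f. Define h on vertices by h(x) = max f(X) − f(x) for x ∈ X and h(y) = f(y) for y ∈ Y, and on edges by h(uv) = q + 1 − |f(u) − f(v)|. Then h is an edge-magic total labeling with magic constant q + 1 + max f(X): for every edge xy ∈ E(G) with x ∈ X, y ∈ Y, one has h(x) + h(xy) + h(y) = q + 1 + max f(X), and {h(uv) : uv ∈ E(G)} = {1, ..., q}. -/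
/-- defining `h(x) = max f(X) − f(x)` for `x ∈ X`, `h(y) = f(y)` for `y ∈ Y`,
and `h(uv) = q + 1 − |f(u) − f(v)|` on edges gives an edge-magic total labeling with magic
constant `q + 1 + max f(X)`, with edge label set `{1,…,q}`. -/
theorem edgeMagic_from_setOrderedGraceful {V : Type*} [Fintype V]
    (G : SimpleGraph V) (hconn : G.Connected) (q : ℕ) (hq : G.edgeSet.ncard = q)
    (X Y : Set V) (hXY : IsBipartitionOf G X Y)
    (f : V → ℕ) (hf : IsSetOrderedGraceful G q X Y f) :
    (∀ x ∈ X, ∀ y ∈ Y, G.Adj x y →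
        (sSup (f '' X) - f x) + (q + 1 - Nat.dist (f x) (f y)) + f y =
          q + 1 + sSup (f '' X)) ∧
      {n : ℕ | ∃ u v, G.Adj u v ∧ q + 1 - Nat.dist (f u) (f v) = n} = Set.Icc 1 q := by
  obtain ⟨hinj, hbd, hset, hord⟩ := hf
  constructor
  · intro x hx y hy hadj
    have hlt : f x < f y := hord x hx y hy
    have hd : Nat.dist (f x) (f y) = f y - f x := Nat.dist_eq_sub_of_le hlt.le
    have hdmem : Nat.dist (f x) (f y) ∈ Set.Icc 1 q := by
      rw [← hset]; exact ⟨x, y, hadj, rfl⟩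
    have hle : f x ≤ sSup (f '' X) := by
      apply le_csSup
      · exact ⟨q, fun n hn => by obtain ⟨v, _, rfl⟩ := hn; exact hbd v⟩
      · exact ⟨x, hx, rfl⟩
    obtain ⟨h1, h2⟩ := hdmem
    omega
  · ext n
    simp only [Set.mem_setOf_eq, Set.mem_Icc]
    constructor
    · rintro ⟨u, v, hadj, rfl⟩
      have : Nat.dist (f u) (f v) ∈ Set.Icc 1 q := by
        rw [← hset]; exact ⟨u, v, hadj, rfl⟩
      obtain ⟨h1, h2⟩ := this
      omega
    · rintro ⟨h1, h2⟩
      have : q + 1 - n ∈ Set.Icc 1 q := by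
        constructor <;> omega
      rw [← hset] at this
      obtain ⟨u, v, hadj, hd⟩ := this
      exact ⟨u, v, hadj, by omega⟩
end

section
/- If a tree T with q edges admits a set-ordered graceful labeling f, then T admits another set-ordered graceful labeling g such that f(uv) + g(uv) = q + 1 for every edge uv ∈ E(T), where f(uv) = |f(u) − f(v)| and g(uv) = |g(u) − g(v)| are the induced edge labels; that is, ⟨f, g⟩ is a matching pair of graceful image-labelings. -/
/-- if a tree `T` with `q` edges admits a set-ordered graceful labeling `f`,
then it admits another set-ordered graceful labeling `g` such that the induced edge labels
satisfy `f(uv) + g(uv) = q + 1` for every edge `uv`. -/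
theorem graceful_image_matching {V : Type*} [Fintype V]
    (T : SimpleGraph V) (hT : T.IsTree) (q : ℕ) (hq : T.edgeSet.ncard = q)
    (X Y : Set V) (hXY : IsBipartitionOf T X Y)
    (f : V → ℕ) (hf : IsSetOrderedGraceful T q X Y f) :
    ∃ g : V → ℕ, IsSetOrderedGraceful T q X Y g ∧
      ∀ u v, T.Adj u v → Nat.dist (f u) (f v) + Nat.dist (g u) (g v) = q + 1 := by
  classical
  obtain ⟨hfinj, hfle, hflab, hford⟩ := hf
  obtain ⟨hunion, hdisj, hbip⟩ := hXY
  have hY : ∀ v, v ∉ X → v ∈ Y := by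
    intro v hv
    have hmem : v ∈ X ∪ Y := by rw [hunion]; exact Set.mem_univ v
    exact hmem.resolve_left hv
  by_cases hq0 : q = 0
  · refine ⟨f, ⟨hfinj, hfle, hflab, hford⟩, ?_⟩
    intro u v huv
    exfalso
    have hmem : Nat.dist (f u) (f v) ∈ {n : ℕ | ∃ u v, T.Adj u v ∧ Nat.dist (f u) (f v) = n} :=
      ⟨u, v, huv, rfl⟩
    rw [hflab] at hmem
    obtain ⟨h1, h2⟩ := hmem
    omega
  · -- there is an edge, hence X and Y are nonempty
    have h1mem : (1 : ℕ) ∈ Set.Icc 1 q := ⟨le_refl 1, by omega⟩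
    rw [← hflab] at h1mem
    obtain ⟨u0, v0, huv0, _⟩ := h1mem
    have hXY0 : ∃ x ∈ X, ∃ y ∈ Y, True := by
      rcases hbip u0 v0 huv0 with ⟨hu, hv⟩ | ⟨hu, hv⟩
      · exact ⟨u0, hu, v0, hv, trivial⟩
      · exact ⟨v0, hv, u0, hu, trivial⟩
    obtain ⟨x0, hx0, y0', hy0', -⟩ := hXY0
    set m := sInf (f '' Y) with hm
    have hYne : (f '' Y).Nonempty := ⟨f y0', ⟨y0', hy0', rfl⟩⟩
    have hmmem : m ∈ f '' Y := Nat.sInf_mem hYne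
    obtain ⟨y0, hy0Y, hy0⟩ := hmmem
    have hmle : ∀ y ∈ Y, m ≤ f y := fun y hy => Nat.sInf_le ⟨y, hy, rfl⟩
    have hxlt : ∀ x ∈ X, f x < m := by
      intro x hx
      have := hford x hx y0 hy0Y
      omega
    have hm1 : 1 ≤ m := by have := hxlt x0 hx0; omega
    have hmq : m ≤ q := by have := hfle y0; omega
    refine ⟨fun v => if v ∈ X then m - 1 - f v else q + m - f v, ⟨?_, ?_, ?_, ?_⟩, ?_⟩
    · -- injective
      intro u v h
      simp only at h
      by_cases hu : u ∈ X <;> by_cases hv : v ∈ X <;>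
        simp only [hu, hv, if_pos, if_neg, if_true, if_false] at h
      · have h1 := hxlt u hu
        have h2 := hxlt v hv
        exact hfinj (by omega)
      · have h1 := hxlt u hu
        have h2 := hfle v
        have h3 := hmle v (hY v hv)
        omega
      · have h1 := hxlt v hv
        have h2 := hfle u
        have h3 := hmle u (hY u hu)
        omega
      · have h1 := hfle u
        have h2 := hfle v
        have h3 := hmle u (hY u hu)
        have h4 := hmle v (hY v hv)
        exact hfinj (by omega)
    · -- bounded by q
      intro v
      by_cases hv : v ∈ X <;> simp only [hv, if_true, if_false]
      · have := hxlt v hv; omega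
      · have h1 := hmle v (hY v hv); have h2 := hfle v; omega
    · -- edge label set
      have hmaster : ∀ u v, T.Adj u v → u ∈ X → v ∈ Y →
          Nat.dist ((fun v => if v ∈ X then m - 1 - f v else q + m - f v) u)
            ((fun v => if v ∈ X then m - 1 - f v else q + m - f v) v)
          = q + 1 - Nat.dist (f u) (f v) := by
        intro u v huv hu hv
        have hvnX : v ∉ X := Set.disjoint_right.mp hdisj hv
        simp only [hu, hvnX, if_true, if_false, if_pos, if_neg]
        have h1 := hxlt u hu
        have h2 := hmle v hv
        have h3 := hfle v
        simp only [Nat.dist]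
        omega
      ext n
      simp only [Set.mem_setOf_eq, Set.mem_Icc]
      constructor
      · rintro ⟨u, v, huv, rfl⟩
        have hfd : Nat.dist (f u) (f v) ∈ Set.Icc 1 q := by
          rw [← hflab]; exact ⟨u, v, huv, rfl⟩
        obtain ⟨hd1, hd2⟩ := hfd
        rcases hbip u v huv with ⟨hu, hv⟩ | ⟨hu, hv⟩
        · rw [hmaster u v huv hu hv]; omega
        · rw [Nat.dist_comm, hmaster v u huv.symm hv hu, Nat.dist_comm (f v)]; omega
      · intro ⟨hn1, hn2⟩
        have hmem : q + 1 - n ∈ Set.Icc 1 q := ⟨by omega, by omega⟩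
        rw [← hflab] at hmem
        obtain ⟨u, v, huv, hd⟩ := hmem
        refine ⟨u, v, huv, ?_⟩
        rcases hbip u v huv with ⟨hu, hv⟩ | ⟨hu, hv⟩
        · rw [hmaster u v huv hu hv]; omega
        · rw [Nat.dist_comm, hmaster v u huv.symm hv hu, Nat.dist_comm (f v)]
          omega
    · -- set-ordered
      intro x hx y hy
      have hynX : y ∉ X := Set.disjoint_right.mp hdisj hy
      simp only [hx, hynX, if_true, if_false, if_pos, if_neg]
      have h1 := hxlt x hx
      have h2 := hfle y
      omega
    · -- matching
      intro u v huv
      have hfd : Nat.dist (f u) (f v) ∈ Set.Icc 1 q := by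
        rw [← hflab]; exact ⟨u, v, huv, rfl⟩
      obtain ⟨hd1, hd2⟩ := hfd
      have hmaster : ∀ u v, T.Adj u v → u ∈ X → v ∈ Y →
          Nat.dist (if u ∈ X then m - 1 - f u else q + m - f u)
            (if v ∈ X then m - 1 - f v else q + m - f v)
          = q + 1 - Nat.dist (f u) (f v) := by
        intro u v huv hu hv
        have hvnX : v ∉ X := Set.disjoint_right.mp hdisj hv
        simp only [hu, hvnX, if_true, if_false, if_pos, if_neg]
        have h1 := hxlt u hu
        have h2 := hmle v hv
        have h3 := hfle v
        simp only [Nat.dist]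
        omega
      rcases hbip u v huv with ⟨hu, hv⟩ | ⟨hu, hv⟩
      · rw [hmaster u v huv hu hv]; omega
      · have hcomm := Nat.dist_comm (f u) (f v)
        rw [Nat.dist_comm
          (if u ∈ X then m - 1 - f u else q + m - f u),
          hmaster v u huv.symm hv hu]
        omega
end

section
/- Let G be a connected bipartite graph with p vertices and q edges admitting a set-ordered odd-graceful labeling. Then any graph G* obtained from G by attaching m ≥ 1 new pendant vertices (leaves), each joined by one new edge to some vertex of G, admits an odd-graceful labeling; that is, G* has an injective vertex labeling into {0, 1, ..., 2(q+m)−1} whose induced edge differences are exactly the odd numbers {1, 3, ..., 2(q+m)−1}. -/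
/-- `f` is a set-ordered odd-graceful labeling of `G` with `q` edges and
bipartition `(X, Y)`: `f` is injective into `{0,…,2q−1}`, the induced edge labels
`|f u − f v|` are exactly the odd numbers `{1,3,…,2q−1}`, and every label on `X` is
smaller than every label on `Y`. -/
def IsSetOrderedOddGraceful {V : Type*} (G : SimpleGraph V) (q : ℕ) (X Y : Set V)
    (f : V → ℕ) : Prop :=
  Function.Injective f ∧ (∀ v, f v ≤ 2 * q - 1) ∧
    {n : ℕ | ∃ u v, G.Adj u v ∧ Nat.dist (f u) (f v) = n} =
      {n : ℕ | Odd n ∧ n ≤ 2 * q - 1} ∧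
    ∀ x ∈ X, ∀ y ∈ Y, f x < f y

/-- The relation describing the graph obtained from `G` by attaching `m` new pendant
vertices, the `i`-th new leaf being joined to the vertex `a i` of `G`. -/
def addLeavesRel {V : Type*} {m : ℕ} (G : SimpleGraph V) (a : Fin m → V) :
    (V ⊕ Fin m) → (V ⊕ Fin m) → Prop
  | Sum.inl u, Sum.inl v => G.Adj u v
  | Sum.inl u, Sum.inr i => a i = u
  | Sum.inr _, Sum.inl _ => False
  | Sum.inr _, Sum.inr _ => False

/-- if a connected bipartite graph `G` with `q` edges admits a set-ordered
odd-graceful labeling, then the graph obtained by attaching `m ≥ 1` pendant vertices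
admits an odd-graceful labeling. -/
theorem addLeaves_oddGraceful {V : Type*} [Fintype V]
    (G : SimpleGraph V) (hconn : G.Connected) (q : ℕ) (hq : G.edgeSet.ncard = q)
    (X Y : Set V) (hXY : IsBipartitionOf G X Y)
    (f : V → ℕ) (hf : IsSetOrderedOddGraceful G q X Y f)
    (m : ℕ) (hm : 1 ≤ m) (a : Fin m → V) :
    ∃ g : (V ⊕ Fin m) → ℕ,
      Function.Injective g ∧ (∀ v, g v ≤ 2 * (q + m) - 1) ∧
      {n : ℕ | ∃ u v, (SimpleGraph.fromRel (addLeavesRel G a)).Adj u v ∧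
          Nat.dist (g u) (g v) = n} =
        {n : ℕ | Odd n ∧ n ≤ 2 * (q + m) - 1} := by
  classical
  obtain ⟨finj, fbd, fset, ford⟩ := hf
  obtain ⟨hcov, hdisj, hadjb⟩ := hXY
  have hY : ∀ v : V, v ∉ X → v ∈ Y := by
    intro v hv
    rcases (Set.eq_univ_iff_forall.mp hcov v) with h | h
    · exact absurd h hv
    · exact h
  have hYX : ∀ v : V, v ∈ Y → v ∉ X := fun v hv => Set.disjoint_right.mp hdisj hv
  have hedge : ∀ u v, G.Adj u v →
      Nat.dist (f u) (f v) % 2 = 1 ∧ Nat.dist (f u) (f v) ≤ 2 * q - 1 := by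
    intro u v h
    have hmem : Nat.dist (f u) (f v) ∈
        {n : ℕ | ∃ u v, G.Adj u v ∧ Nat.dist (f u) (f v) = n} := ⟨u, v, h, rfl⟩
    rw [fset] at hmem
    exact ⟨Nat.odd_iff.mp hmem.1, hmem.2⟩
  have hsurj0 : ∀ n : ℕ, n % 2 = 1 → n ≤ 2 * q - 1 →
      ∃ u v, G.Adj u v ∧ Nat.dist (f u) (f v) = n := by
    intro n h1 h2
    have hmem : n ∈ {n : ℕ | Odd n ∧ n ≤ 2 * q - 1} := ⟨Nat.odd_iff.mpr h1, h2⟩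
    rw [← fset] at hmem
    exact hmem
  rcases Nat.eq_zero_or_pos q with hq0 | hq1
  · -- the degenerate case `q = 0`: `G` is a single vertex, `G*` is a star
    subst hq0
    have hsub : ∀ u v : V, u = v := by
      intro u v
      apply finj
      have h1 := fbd u; have h2 := fbd v; omega
    refine ⟨Sum.elim (fun _ => 0) (fun i => 2 * i.val + 1), ?_, ?_, ?_⟩
    · intro x y h
      rcases x with u | i <;> rcases y with v | j <;> simp only [Sum.elim_inl, Sum.elim_inr] at h
      · exact congrArg _ (hsub u v)
      · exfalso; omega
      · exfalso; omega
      · have : i.val = j.val := by omega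
        exact congrArg _ (Fin.ext this)
    · rintro (u | i)
      · simp
      · have := i.isLt; simp only [Sum.elim_inr]; omega
    · ext n
      simp only [Set.mem_setOf_eq]
      constructor
      · rintro ⟨x, y, hxy, rfl⟩
        rw [SimpleGraph.fromRel_adj] at hxy
        obtain ⟨hne', hrel⟩ := hxy
        rcases x with u | i <;> rcases y with v | j <;>
          simp only [addLeavesRel] at hrel
        · exfalso
          rcases hrel with h | h
          · exact h.ne (hsub u v)
          · exact h.ne (hsub v u)
        · rw [Nat.odd_iff]
          have := j.isLt
          simp only [Sum.elim_inl, Sum.elim_inr, Nat.dist]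
          omega
        · rw [Nat.odd_iff]
          have := i.isLt
          simp only [Sum.elim_inl, Sum.elim_inr, Nat.dist]
          omega
        · simp at hrel
      · rintro ⟨hodd, hle⟩
        rw [Nat.odd_iff] at hodd
        obtain ⟨v0⟩ := hconn.nonempty
        refine ⟨Sum.inl v0, Sum.inr ⟨(n - 1) / 2, by omega⟩, ?_, ?_⟩
        · rw [SimpleGraph.fromRel_adj]
          refine ⟨by simp, Or.inl ?_⟩
          show a _ = v0
          exact hsub _ _
        · simp only [Sum.elim_inl, Sum.elim_inr, Nat.dist]
          omega
  · -- the main case `q ≥ 1`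
    -- parity: labels in `X` all have one parity, labels in `Y` the other
    have parity : ∀ u v : V, ((u ∈ X ↔ v ∈ X) ↔ (f u % 2 = f v % 2)) := by
      intro u v
      obtain ⟨w⟩ := hconn.preconnected u v
      induction w with
      | nil => simp
      | @cons u b v h p ih =>
        have hpar : f u % 2 ≠ f b % 2 := by
          have h1 := (hedge u b h).1
          simp only [Nat.dist] at h1
          omega
        have hx : ¬ (u ∈ X ↔ b ∈ X) := by
          rcases hadjb u b h with ⟨h1, h2⟩ | ⟨h1, h2⟩
          · exact fun hiff => (hYX b h2) (hiff.mp h1)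
          · exact fun hiff => (hYX u h1) (hiff.mpr h2)
        constructor
        · intro huv
          have hb : ¬ (b ∈ X ↔ v ∈ X) := by tauto
          have hb2 : ¬ (f b % 2 = f v % 2) := fun hh => hb (ih.mpr hh)
          omega
        · intro hpv
          have h2 : ¬ (f b % 2 = f v % 2) := by omega
          have h3 : ¬ (b ∈ X ↔ v ∈ X) := fun hh => h2 (ih.mp hh)
          tauto
    have parX : ∀ u v : V, u ∈ X → v ∈ X → f u % 2 = f v % 2 :=
      fun u v hu hv => (parity u v).mp (iff_of_true hu hv)
    have parY : ∀ u v : V, u ∉ X → v ∉ X → f u % 2 = f v % 2 :=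
      fun u v hu hv => (parity u v).mp (iff_of_false hu hv)
    have parXY : ∀ u v : V, u ∈ X → v ∉ X → f u % 2 ≠ f v % 2 :=
      fun u v hu hv hh => hv (((parity u v).mpr hh).mp hu)
    -- ranking of the leaves
    set base : Fin m → ℕ := fun i => if a i ∈ X then f (a i) else 2 * q - f (a i)
      with hbase
    set key : Fin m → ℕ := fun i => base i * m + i.val with hkey
    set r : Fin m → ℕ :=
      fun i => (Finset.univ.filter fun j => key j < key i).card with hrdef
    have keylt : ∀ i j, base i < base j → key i < key j := by
      intro i j h
      have hi := i.isLt
      calc key i = base i * m + i.val := rfl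
        _ < (base i + 1) * m := by
            have : i.val < m := hi
            nlinarith
        _ ≤ base j * m := Nat.mul_le_mul_right m h
        _ ≤ key j := Nat.le_add_right _ _
    have keyinj : ∀ i j : Fin m, key i = key j → i = j := by
      intro i j hij
      rcases lt_trichotomy (base i) (base j) with h | h | h
      · exact absurd hij (Nat.ne_of_lt (keylt i j h))
      · have h2 : base i * m + i.val = base j * m + j.val := hij
        rw [h] at h2
        exact Fin.ext (by omega)
      · exact absurd hij.symm (Nat.ne_of_lt (keylt j i h))
    have rmono : ∀ i j, key i < key j → r i < r j := by
      intro i j h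
      apply Finset.card_lt_card
      rw [Finset.ssubset_iff_of_subset]
      · refine ⟨i, ?_, ?_⟩
        · simp [h]
        · simp
      · intro x hx
        simp only [Finset.mem_filter, Finset.mem_univ, true_and] at hx ⊢
        omega
    have rlt : ∀ i, r i < m := by
      intro i
      have hsubset : (Finset.univ.filter fun j => key j < key i) ⊆
          Finset.univ.erase i := by
        intro x hx
        simp only [Finset.mem_filter, Finset.mem_univ, true_and] at hx
        refine Finset.mem_erase.mpr ⟨?_, Finset.mem_univ x⟩
        rintro rfl
        omega
      have hc := Finset.card_le_card hsubset
      have h2 : (Finset.univ.erase i).card = m - 1 := by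
        rw [Finset.card_erase_of_mem (Finset.mem_univ i)]
        simp
      have : r i ≤ m - 1 := by rw [← h2]; exact hc
      omega
    have rinj : ∀ i j : Fin m, r i = r j → i = j := by
      intro i j hij
      rcases lt_trichotomy (key i) (key j) with h | h | h
      · exact absurd hij (Nat.ne_of_lt (rmono _ _ h))
      · exact keyinj _ _ h
      · exact absurd hij.symm (Nat.ne_of_lt (rmono _ _ h))
    have rsurj : ∀ k, k < m → ∃ i, r i = k := by
      intro k hk
      have himg : Finset.image r Finset.univ = Finset.range m := by
        apply Finset.eq_of_subset_of_card_le
        · intro x hx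
          simp only [Finset.mem_image, Finset.mem_univ, true_and] at hx
          obtain ⟨i, rfl⟩ := hx
          exact Finset.mem_range.mpr (rlt i)
        · rw [Finset.card_range,
            Finset.card_image_of_injective _ (fun i j h => rinj i j h)]
          simp
      have : k ∈ Finset.image r Finset.univ := himg ▸ Finset.mem_range.mpr hk
      simpa using this
    have rmonoX : ∀ i j, a i ∈ X → a j ∈ X → f (a i) < f (a j) → r i < r j := by
      intro i j hi hj h
      refine rmono _ _ (keylt _ _ ?_)
      simp only [hbase, hi, hj, if_true]
      exact h
    have rmonoY : ∀ i j, a i ∉ X → a j ∉ X → f (a i) < f (a j) → r j < r i := by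
      intro i j hi hj h
      refine rmono _ _ (keylt _ _ ?_)
      simp only [hbase, hi, hj, if_false]
      have h1 := fbd (a i); have h2 := fbd (a j)
      omega
    -- the new labeling
    refine ⟨Sum.elim (fun v => if v ∈ X then f v else f v + 2 * m)
      (fun i => if a i ∈ X then f (a i) + (2 * r i + 1)
        else f (a i) + 2 * m - (2 * r i + 1)), ?_, ?_, ?_⟩
    · -- injectivity
      intro x y hxy
      rcases x with u | i <;> rcases y with v | j <;>
        simp only [Sum.elim_inl, Sum.elim_inr] at hxy
      · by_cases hu : u ∈ X <;> by_cases hv : v ∈ X <;>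
          simp only [hu, hv, if_true, if_false] at hxy
        · exact congrArg _ (finj hxy)
        · exfalso
          have := ford u hu v (hY v hv)
          omega
        · exfalso
          have := ford v hv u (hY u hu)
          omega
        · exact congrArg _ (finj (by omega))
      · exfalso
        by_cases hu : u ∈ X <;> by_cases hj : a j ∈ X <;>
          simp only [hu, hj, if_true, if_false] at hxy
        · have := parX u (a j) hu hj
          omega
        · have := ford u hu (a j) (hY _ hj)
          have := rlt j
          omega
        · have := ford (a j) hj u (hY u hu)
          have := rlt j
          omega
        · have := parY u (a j) hu hj
          have := rlt j
          omega
      · exfalso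
        by_cases hv : v ∈ X <;> by_cases hi : a i ∈ X <;>
          simp only [hv, hi, if_true, if_false] at hxy
        · have := parX v (a i) hv hi
          omega
        · have := ford v hv (a i) (hY _ hi)
          have := rlt i
          omega
        · have := ford (a i) hi v (hY v hv)
          have := rlt i
          omega
        · have := parY v (a i) hv hi
          have := rlt i
          omega
      · refine congrArg _ (rinj i j ?_)
        by_cases hi : a i ∈ X <;> by_cases hj : a j ∈ X <;>
          simp only [hi, hj, if_true, if_false] at hxy
        · rcases lt_trichotomy (f (a i)) (f (a j)) with h | h | h
          · have := rmonoX i j hi hj h; omega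
          · omega
          · have := rmonoX j i hj hi h; omega
        · exfalso
          have := parXY (a i) (a j) hi hj
          have := rlt i; have := rlt j
          omega
        · exfalso
          have := parXY (a j) (a i) hj hi
          have := rlt i; have := rlt j
          omega
        · have := rlt i; have := rlt j
          have h1 := fbd (a i); have h2 := fbd (a j)
          rcases lt_trichotomy (f (a i)) (f (a j)) with h | h | h
          · have := rmonoY i j hi hj h; omega
          · have : a i = a j := finj h
            rw [this] at hxy
            omega
          · have := rmonoY j i hj hi h; omega
    · -- bound
      rintro (u | i)
      · by_cases hu : u ∈ X <;> simp only [Sum.elim_inl, hu, if_true, if_false] <;>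
          (have := fbd u; omega)
      · by_cases hi : a i ∈ X <;> simp only [Sum.elim_inr, hi, if_true, if_false] <;>
          (have := fbd (a i); have := rlt i; omega)
    · -- the set of edge labels
      ext n
      simp only [Set.mem_setOf_eq]
      constructor
      · rintro ⟨x, y, hxy, rfl⟩
        rw [SimpleGraph.fromRel_adj] at hxy
        obtain ⟨hne', hrel⟩ := hxy
        rw [Nat.odd_iff]
        rcases x with u | i <;> rcases y with v | j <;>
          simp only [addLeavesRel] at hrel
        · have hA : G.Adj u v := by
            rcases hrel with h | h
            · exact h
            · exact h.symm
          have h1 := hedge u v hA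
          simp only [Nat.dist] at h1
          rcases hadjb u v hA with ⟨hx, hy⟩ | ⟨hy, hx⟩
          · have := ford u hx v hy
            simp only [Sum.elim_inl, hx, hYX v hy, if_true, if_false, Nat.dist]
            omega
          · have := ford v hx u hy
            simp only [Sum.elim_inl, hx, hYX u hy, if_true, if_false, Nat.dist]
            omega
        · have ha : a j = u := by tauto
          subst ha
          have := rlt j
          by_cases hj : a j ∈ X <;>
            simp only [Sum.elim_inl, Sum.elim_inr, hj, if_true, if_false, Nat.dist] <;>
            omega
        · have ha : a i = v := by tauto
          subst ha
          have := rlt i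
          by_cases hi : a i ∈ X <;>
            simp only [Sum.elim_inl, Sum.elim_inr, hi, if_true, if_false, Nat.dist] <;>
            omega
        · simp at hrel
      · rintro ⟨hodd, hle⟩
        rw [Nat.odd_iff] at hodd
        by_cases hn : n < 2 * m
        · obtain ⟨i, hi⟩ := rsurj ((n - 1) / 2) (by omega)
          refine ⟨Sum.inl (a i), Sum.inr i, ?_, ?_⟩
          · rw [SimpleGraph.fromRel_adj]
            refine ⟨by simp, Or.inl ?_⟩
            show a i = a i
            rfl
          · have := rlt i
            by_cases hai : a i ∈ X <;>
              simp only [Sum.elim_inl, Sum.elim_inr, hai, if_true, if_false, Nat.dist] <;>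
              omega
        · obtain ⟨u, v, hA, hd⟩ := hsurj0 (n - 2 * m) (by omega) (by omega)
          refine ⟨Sum.inl u, Sum.inl v, ?_, ?_⟩
          · rw [SimpleGraph.fromRel_adj]
            refine ⟨by simpa using hA.ne, Or.inl ?_⟩
            show G.Adj u v
            exact hA
          · simp only [Nat.dist] at hd
            rcases hadjb u v hA with ⟨hx, hy⟩ | ⟨hy, hx⟩
            · have := ford u hx v hy
              simp only [Sum.elim_inl, hx, hYX v hy, if_true, if_false, Nat.dist]
              omega
            · have := ford v hx u hy
              simp only [Sum.elim_inl, hx, hYX u hy, if_true, if_false, Nat.dist]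
              omega
end

section
/- If a tree T with p vertices and q = p−1 edges admits a set-ordered graceful labeling, then for all integers k ≥ 1 and d ≥ 1, T admits a totally (k,d)-sequential labeling: a bijection g : V(T) ∪ E(T) → {k, k+d, k+2d, ..., k+(p+q−1)d} such that g(xy) = k − d + |g(x) − g(y)| for every edge xy ∈ E(T). -/
lemma natdist_cast_int (a b : ℕ) : ((Nat.dist a b : ℕ) : ℤ) = |(a : ℤ) - (b : ℤ)| := by
  rcases le_total a b with h | h
  · rw [Nat.dist_eq_sub_of_le h, abs_of_nonpos (by omega : (a:ℤ) - b ≤ 0)]; omega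
  · rw [Nat.dist_eq_sub_of_le_right h, abs_of_nonneg (by omega : (0:ℤ) ≤ (a:ℤ) - b)]; omega

/-- if a tree `T` with `p` vertices and `q = p − 1` edges admits a
set-ordered graceful labeling, then for all `k ≥ 1`, `d ≥ 1`, `T` admits a totally
`(k,d)`-sequential labeling: a bijection `g` from `V(T) ∪ E(T)` onto
`{k, k+d, …, k+(p+q−1)d}` with `g(xy) = k − d + |g(x) − g(y)|` for every edge `xy`. -/
theorem totally_kd_sequential {V : Type*} [Fintype V]
    (T : SimpleGraph V) (hT : T.IsTree)
    (X Y : Set V) (hXY : IsBipartitionOf T X Y)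
    (q : ℕ) (hq : T.edgeSet.ncard = q)
    (f : V → ℕ) (hf : IsSetOrderedGraceful T q X Y f)
    (k d : ℕ) (hk : 1 ≤ k) (hd : 1 ≤ d) :
    ∃ g : (V ⊕ ↥T.edgeSet) → ℕ,
      Function.Injective g ∧
      Set.range g = {n : ℕ | ∃ j < Fintype.card V + q, n = k + j * d} ∧
      ∀ (u v : V) (h : T.Adj u v),
        (g (Sum.inr ⟨s(u, v), (SimpleGraph.mem_edgeSet T).mpr h⟩) : ℤ) =
          (k : ℤ) - (d : ℤ) + |(g (Sum.inl u) : ℤ) - (g (Sum.inl v) : ℤ)| := by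
  classical
  obtain ⟨finj, fle, fdist, -⟩ := hf
  have hne : Nonempty V := hT.isConnected.nonempty
  have hcardE : Fintype.card T.edgeSet = q := by
    rw [← Set.toFinset_card, ← Set.ncard_eq_toFinset_card']; exact hq
  have hVcard : Fintype.card V = q + 1 := by
    have h1 := hT.card_edgeFinset
    have h2 : T.edgeFinset.card = q := by
      rw [SimpleGraph.edgeFinset_card]; exact hcardE
    have h3 : 0 < Fintype.card V := Fintype.card_pos
    omega
  -- f is onto Iic q
  have himg : Finset.image f Finset.univ = Finset.Iic q := by
    apply Finset.eq_of_subset_of_card_le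
    · intro n hn
      simp only [Finset.mem_image, Finset.mem_univ, true_and] at hn
      obtain ⟨v, rfl⟩ := hn
      exact Finset.mem_Iic.mpr (fle v)
    · rw [Nat.card_Iic, Finset.card_image_of_injective _ finj, Finset.card_univ, hVcard]
  -- the edge label function
  set D : Sym2 V → ℕ :=
    Sym2.lift ⟨fun u v => Nat.dist (f u) (f v), fun u v => Nat.dist_comm (f u) (f v)⟩ with hD
  set ε : T.edgeSet → ℕ := fun e => D e.1 with hε
  have hrange : Set.range ε = Set.Icc 1 q := by
    rw [← fdist]
    ext n
    constructor
    · rintro ⟨⟨e, he⟩, rfl⟩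
      induction e with
      | _ u v => exact ⟨u, v, he, rfl⟩
    · rintro ⟨u, v, huv, rfl⟩
      exact ⟨⟨s(u, v), huv⟩, rfl⟩
  have hεmem : ∀ e, 1 ≤ ε e ∧ ε e ≤ q := by
    intro e
    have : ε e ∈ Set.Icc 1 q := hrange ▸ Set.mem_range_self e
    exact ⟨this.1, this.2⟩
  have hεinj : Function.Injective ε := by
    set ε' : T.edgeSet → (Set.Icc 1 q : Set ℕ) :=
      fun e => ⟨ε e, hrange ▸ Set.mem_range_self e⟩ with hε'
    have hsurj : Function.Surjective ε' := by
      rintro ⟨n, hn⟩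
      rw [← hrange] at hn
      obtain ⟨e, he⟩ := hn
      exact ⟨e, Subtype.ext he⟩
    have hcard : Fintype.card T.edgeSet = Fintype.card (Set.Icc 1 q : Set ℕ) := by
      rw [hcardE, ← Set.toFinset_card, Set.toFinset_Icc, Nat.card_Icc]
      omega
    have hbij : Function.Bijective ε' :=
      (Fintype.bijective_iff_surjective_and_card ε').2 ⟨hsurj, hcard⟩
    intro a b hab
    exact hbij.1 (Subtype.ext hab)
  refine ⟨Sum.elim (fun v => k + 2 * f v * d) (fun e => k + (2 * ε e - 1) * d), ?_, ?_, ?_⟩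
  · rintro (a | a) (b | b) hab
    · simp only [Sum.elim_inl] at hab
      have : 2 * f a = 2 * f b :=
        Nat.eq_of_mul_eq_mul_right hd (by omega)
      exact congrArg Sum.inl (finj (by omega))
    · simp only [Sum.elim_inl, Sum.elim_inr] at hab
      have h1 := (hεmem b).1
      have : 2 * f a = 2 * ε b - 1 := Nat.eq_of_mul_eq_mul_right hd (by omega)
      omega
    · simp only [Sum.elim_inl, Sum.elim_inr] at hab
      have h1 := (hεmem a).1
      have : 2 * ε a - 1 = 2 * f b := Nat.eq_of_mul_eq_mul_right hd (by omega)
      omega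
    · simp only [Sum.elim_inr] at hab
      have h1 := (hεmem a).1
      have h2 := (hεmem b).1
      have : 2 * ε a - 1 = 2 * ε b - 1 := Nat.eq_of_mul_eq_mul_right hd (by omega)
      exact congrArg Sum.inr (hεinj (by omega))
  · ext n
    simp only [Set.mem_range, Set.mem_setOf_eq]
    constructor
    · rintro ⟨(v | e), rfl⟩
      · exact ⟨2 * f v, by have := fle v; omega, by simp⟩
      · exact ⟨2 * ε e - 1, by have := (hεmem e).2; have := (hεmem e).1; omega, by simp⟩
    · rintro ⟨j, hj, rfl⟩
      rw [hVcard] at hj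
      rcases Nat.even_or_odd j with ⟨m, hm⟩ | ⟨m, hm⟩
      · have hmq : m ≤ q := by omega
        have : m ∈ Finset.Iic q := Finset.mem_Iic.mpr hmq
        rw [← himg] at this
        simp only [Finset.mem_image, Finset.mem_univ, true_and] at this
        obtain ⟨v, hv⟩ := this
        refine ⟨Sum.inl v, ?_⟩
        simp only [Sum.elim_inl, hv]
        have : j = 2 * m := by omega
        rw [this]
      · have hmq : m + 1 ∈ Set.Icc 1 q := Set.mem_Icc.mpr ⟨by omega, by omega⟩
        rw [← hrange] at hmq
        obtain ⟨e, he⟩ := hmq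
        refine ⟨Sum.inr e, ?_⟩
        simp only [Sum.elim_inr, he]
        have : j = 2 * (m + 1) - 1 := by omega
        rw [this]
  · intro u v h
    have hfne : f u ≠ f v := fun hh => h.ne (finj hh)
    have hdne : Nat.dist (f u) (f v) ≠ 0 := fun h0 => hfne (Nat.eq_of_dist_eq_zero h0)
    have hεval : ε ⟨s(u, v), (SimpleGraph.mem_edgeSet T).mpr h⟩ = Nat.dist (f u) (f v) := rfl
    simp only [Sum.elim_inl, Sum.elim_inr, hεval]
    set m := Nat.dist (f u) (f v) with hm
    have hm1 : 1 ≤ m := by omega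
    have habs : |((k + 2 * f u * d : ℕ) : ℤ) - ((k + 2 * f v * d : ℕ) : ℤ)| =
        2 * d * (m : ℤ) := by
      have : ((k + 2 * f u * d : ℕ) : ℤ) - ((k + 2 * f v * d : ℕ) : ℤ) =
          (2 * d) * ((f u : ℤ) - (f v : ℤ)) := by push_cast; ring
      rw [this, abs_mul, abs_of_nonneg (by positivity : (0:ℤ) ≤ 2 * (d:ℤ)),
        ← natdist_cast_int, ← hm]
    rw [habs]
    have hcast : ((2 * m - 1 : ℕ) : ℤ) = 2 * (m : ℤ) - 1 := by omega
    push_cast [hcast]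
    ring
end

section
/- (Cayley's formula) For every integer n ≥ 1, the number of spanning trees of the complete graph K_n, equivalently the number of labeled trees on the vertex set {1, ..., n}, equals n^{n−2}. -/
/-!
Root the trees at a vertex `r`. A tree is then the same thing as a parent map: the map `f`
sending each vertex other than `r` to its neighbour on the way to `r`, with `f r = r` and every
vertex reaching `r` under iteration; the tree is recovered as the graph with edges `{v, f v}`.
Parent maps are counted by Prüfer's bijection: repeatedly delete the largest leaf and record its
parent. This produces a word of length `n - 1` whose last letter is `r`, and it can be decoded
because at each stage the leaves are exactly the vertices that do not occur in the rest of the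
word. So there are `n ^ (n - 2)` parent maps, hence trees.
-/

open Finset Function SimpleGraph

variable {V : Type*}

lemma Set.EqOn.iterate_of_mapsTo {f g : V → V} {t : Set V} (hf : Set.MapsTo f t t)
    (h : Set.EqOn g f t) (k : ℕ) : Set.EqOn g^[k] f^[k] t := by
  induction k with
  | zero => exact fun _ _ => rfl
  | succ k ih => exact fun v hv => by rw [iterate_succ_apply, iterate_succ_apply, h hv, ih (hf hv)]

lemma Finset.eq_singleton_of_mem_of_card_eq_one {s : Finset V} {a : V} (ha : a ∈ s)
    (hs : #s = 1) : s = {a} :=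
  eq_singleton_iff_unique_mem.2 ⟨ha, fun x hx => card_le_one.1 hs.le x hx a ha⟩

/-- A tree on `s` rooted at `r`, recorded by its parent map; `f` is the identity off `s`, so that
it is determined by the tree. -/
structure IsParentMap (s : Finset V) (r : V) (f : V → V) : Prop where
  root_mem : r ∈ s
  apply_root : f r = r
  apply_of_notMem : ∀ v ∉ s, f v = v
  mapsTo : Set.MapsTo f s s
  exists_iterate_eq_root : ∀ v ∈ s, ∃ k, f^[k] v = r

open Classical in
noncomputable def rootDepth (r : V) (f : V → V) (v : V) : ℕ :=
  if h : ∃ k, f^[k] v = r then Nat.find h else 0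

lemma rootDepth_eq_rootDepth_apply_add_one {r : V} {f : V → V} {v : V}
    (h : ∃ k, f^[k] v = r) (hv : v ≠ r) : rootDepth r f v = rootDepth r f (f v) + 1 := by
  classical
  have h' : ∃ k, f^[k] (f v) = r := by
    obtain ⟨_ | k, hk⟩ := h
    · exact absurd hk hv
    · exact ⟨k, hk⟩
  rw [rootDepth, rootDepth, dif_pos h, dif_pos h']
  exact Nat.find_comp_succ h h' hv

lemma isParentMap_univ_iff [Fintype V] {r : V} {f : V → V} :
    IsParentMap univ r f ↔ f r = r ∧ ∀ v, ∃ k, f^[k] v = r :=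
  ⟨fun hf => ⟨hf.apply_root, fun v => hf.exists_iterate_eq_root v (mem_univ v)⟩,
    fun ⟨hr, h⟩ => ⟨mem_univ r, hr, fun v hv => absurd (mem_univ v) hv,
      fun v _ => mem_univ (f v), fun v _ => h v⟩⟩

namespace IsParentMap

variable {s : Finset V} {r : V} {f : V → V} {v : V}

lemma rootDepth_eq_rootDepth_apply_add_one (hf : IsParentMap s r f) (hv : v ∈ s)
    (hvr : v ≠ r) : rootDepth r f v = rootDepth r f (f v) + 1 :=
  _root_.rootDepth_eq_rootDepth_apply_add_one (hf.exists_iterate_eq_root v hv) hvr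

lemma apply_ne_self (hf : IsParentMap s r f) (hv : v ∈ s) (hvr : v ≠ r) : f v ≠ v := by
  intro h
  have := hf.rootDepth_eq_rootDepth_apply_add_one hv hvr
  rw [h] at this
  omega

lemma apply_apply_ne_self (hf : IsParentMap s r f) (hv : v ∈ s) (hvr : v ≠ r) :
    f (f v) ≠ v := by
  intro h
  have hfvr : f v ≠ r := fun h' => hvr (by rw [← h, h', hf.apply_root])
  have h1 := hf.rootDepth_eq_rootDepth_apply_add_one hv hvr
  have h2 := hf.rootDepth_eq_rootDepth_apply_add_one (hf.mapsTo hv) hfvr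
  rw [h] at h2
  omega

lemma singleton_id (r : V) : IsParentMap {r} r id :=
  ⟨mem_singleton_self r, rfl, fun _ _ => rfl, Set.mapsTo_id _,
    fun _ hv => ⟨0, mem_singleton.1 hv⟩⟩

lemma eq_id_of_singleton (hf : IsParentMap {r} r f) : f = id := by
  funext v
  by_cases hvr : v = r
  · exact hvr ▸ hf.apply_root
  · exact hf.apply_of_notMem v (by simpa using hvr)

variable [DecidableEq V]

/-- A non-root vertex of maximal depth is a leaf. -/
lemma sdiff_image_nonempty (hf : IsParentMap s r f) (hs : 2 ≤ #s) :
    (s \ s.image f).Nonempty := by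
  have hne : (s.erase r).Nonempty := by
    rw [← card_pos, card_erase_of_mem hf.root_mem]; omega
  obtain ⟨ℓ, hℓ, hmax⟩ := exists_max_image (s.erase r) (rootDepth r f) hne
  refine ⟨ℓ, mem_sdiff.2 ⟨mem_of_mem_erase hℓ, fun him => ?_⟩⟩
  obtain ⟨w, hw, rfl⟩ := mem_image.1 him
  have hwr : w ≠ r := fun h => ne_of_mem_erase hℓ (by rw [h, hf.apply_root])
  have := hf.rootDepth_eq_rootDepth_apply_add_one hw hwr
  have := hmax w (mem_erase.2 ⟨hwr, hw⟩)
  omega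

lemma eq_singleton_of_sdiff_image_eq_empty (hf : IsParentMap s r f)
    (h : s \ s.image f = ∅) : s = {r} :=
  eq_singleton_iff_unique_mem.2 ⟨hf.root_mem, fun v hv => by
    by_contra hvr
    exact (hf.sdiff_image_nonempty (one_lt_card.2 ⟨v, hv, r, hf.root_mem, hvr⟩)).ne_empty h⟩

lemma erase_leaf (hf : IsParentMap s r f) {ℓ : V} (hℓ : ℓ ∈ s \ s.image f) :
    IsParentMap (s.erase ℓ) r (update f ℓ ℓ) := by
  obtain ⟨hℓs, hℓf⟩ := mem_sdiff.1 hℓ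
  have hrs : r ∈ s.erase ℓ := mem_erase.2
    ⟨fun h => hℓf (mem_image.2 ⟨r, hf.root_mem, h ▸ hf.apply_root⟩), hf.root_mem⟩
  have heq : Set.EqOn (update f ℓ ℓ) f (s.erase ℓ) := fun v hv =>
    update_of_ne (ne_of_mem_erase hv) _ _
  have hmaps : Set.MapsTo f (s.erase ℓ) (s.erase ℓ) := fun v hv =>
    mem_erase.2 ⟨fun h => hℓf (mem_image.2 ⟨v, mem_of_mem_erase hv, h⟩),
      hf.mapsTo (mem_of_mem_erase hv)⟩
  refine ⟨hrs, by rw [heq hrs, hf.apply_root], fun v hv => ?_, hmaps.congr heq.symm,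
    fun v hv => ?_⟩
  · by_cases hvℓ : v = ℓ
    · rw [hvℓ, update_self]
    · rw [update_of_ne hvℓ]
      exact hf.apply_of_notMem v fun hvs => hv (mem_erase.2 ⟨hvℓ, hvs⟩)
  · obtain ⟨k, hk⟩ := hf.exists_iterate_eq_root v (mem_of_mem_erase hv)
    exact ⟨k, by rw [heq.iterate_of_mapsTo hmaps k hv, hk]⟩

lemma insert_leaf {t : Finset V} {g : V → V} {ℓ p : V} (hg : IsParentMap t r g)
    (hℓ : ℓ ∉ t) (hp : p ∈ t) : IsParentMap (insert ℓ t) r (update g ℓ p) := by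
  have heq : Set.EqOn (update g ℓ p) g t := fun v hv =>
    update_of_ne (fun h => hℓ (by rwa [← h])) _ _
  have hreach : ∀ v ∈ t, ∃ k, (update g ℓ p)^[k] v = r := fun v hv => by
    obtain ⟨k, hk⟩ := hg.exists_iterate_eq_root v hv
    exact ⟨k, by rw [heq.iterate_of_mapsTo hg.mapsTo k hv, hk]⟩
  refine ⟨mem_insert_of_mem hg.root_mem, by rw [heq hg.root_mem, hg.apply_root], fun v hv => ?_,
    fun v hv => ?_, fun v hv => ?_⟩
  · rw [mem_insert, not_or] at hv
    rw [update_of_ne hv.1, hg.apply_of_notMem v hv.2]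
  · rcases mem_insert.1 hv with rfl | hv
    · simpa using mem_insert_of_mem hp
    · rw [heq hv]; exact mem_insert_of_mem (hg.mapsTo hv)
  · rcases mem_insert.1 hv with rfl | hv
    · obtain ⟨k, hk⟩ := hreach p hp
      exact ⟨k + 1, by rwa [iterate_succ_apply, update_self]⟩
    · exact hreach v hv

end IsParentMap

namespace Prufer

structure IsCode (r : V) (s : Finset V) (c : List V) : Prop where
  root_mem : r ∈ s
  length_add_one : c.length + 1 = #s
  subset : ∀ x ∈ c, x ∈ s
  getLast_eq : ∀ h : c ≠ [], c.getLast h = r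

namespace IsCode

variable {s : Finset V} {r p : V} {c : List V}

lemma mem_of_ne_nil (hc : IsCode r s c) (hne : c ≠ []) : r ∈ c :=
  hc.getLast_eq hne ▸ List.getLast_mem hne

lemma eq_singleton_of_nil (hc : IsCode r s []) : s = {r} :=
  eq_singleton_of_mem_of_card_eq_one hc.root_mem hc.length_add_one.symm

variable [DecidableEq V]

lemma sdiff_toFinset_nonempty (hc : IsCode r s (p :: c)) : (s \ (p :: c).toFinset).Nonempty := by
  rw [← card_pos]
  have := (p :: c).toFinset_card_le
  have := le_card_sdiff (p :: c).toFinset s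
  have := hc.length_add_one
  simp only [List.length_cons] at *
  omega

lemma erase {ℓ : V} (hc : IsCode r s (p :: c)) (hℓ : ℓ ∈ s \ (p :: c).toFinset) :
    IsCode r (s.erase ℓ) c := by
  obtain ⟨hℓs, hℓc⟩ := mem_sdiff.1 hℓ
  have hne : ∀ x ∈ p :: c, x ≠ ℓ := fun x hx h => hℓc (List.mem_toFinset.2 (h ▸ hx))
  refine ⟨mem_erase.2 ⟨hne r (hc.mem_of_ne_nil (List.cons_ne_nil p c)), hc.root_mem⟩, ?_,
    fun x hx => mem_erase.2 ⟨hne x (.tail p hx), hc.subset x (.tail p hx)⟩, fun h => ?_⟩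
  · have := hc.length_add_one
    rw [card_erase_of_mem hℓs]
    simp only [List.length_cons] at this
    omega
  · rw [← List.getLast_cons h]
    exact hc.getLast_eq _

end IsCode

section Coding

variable [LinearOrder V]

def encode (s : Finset V) (f : V → V) : List V :=
  if h : (s \ s.image f).Nonempty then
    f ((s \ s.image f).max' h) ::
      encode (s.erase ((s \ s.image f).max' h))
        (update f ((s \ s.image f).max' h) ((s \ s.image f).max' h))
  else []
termination_by #s
decreasing_by exact card_erase_lt_of_mem (mem_sdiff.1 (max'_mem _ h)).1

def decode : List V → Finset V → V → V
  | [], _ => id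
  | p :: c, s =>
    if h : (s \ (p :: c).toFinset).Nonempty then
      update (decode c (s.erase ((s \ (p :: c).toFinset).max' h)))
        ((s \ (p :: c).toFinset).max' h) p
    else id

variable {s : Finset V} {r ℓ : V} {f : V → V}

lemma encode_eq_cons (hℓ : IsGreatest ↑(s \ s.image f) ℓ) :
    encode s f = f ℓ :: encode (s.erase ℓ) (update f ℓ ℓ) := by
  have h : (s \ s.image f).Nonempty := ⟨ℓ, hℓ.1⟩
  rw [encode, dif_pos h, (isGreatest_max' _ h).unique hℓ]

lemma encode_singleton_id : encode {r} id = [] := by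
  rw [encode, dif_neg (by simp)]

lemma decode_cons {p : V} {c : List V} (hℓ : IsGreatest ↑(s \ (p :: c).toFinset) ℓ) :
    decode (p :: c) s = update (decode c (s.erase ℓ)) ℓ p := by
  have h : (s \ (p :: c).toFinset).Nonempty := ⟨ℓ, hℓ.1⟩
  rw [decode, dif_pos h, (isGreatest_max' _ h).unique hℓ]

theorem _root_.IsParentMap.encode_induction
    {motive : (s : Finset V) → (f : V → V) → IsParentMap s r f → Prop}
    (singleton : motive {r} id (.singleton_id r))
    (erase : ∀ s f ℓ (hf : IsParentMap s r f) (hℓ : IsGreatest ↑(s \ s.image f) ℓ),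
      motive (s.erase ℓ) (update f ℓ ℓ) (hf.erase_leaf (ℓ := ℓ) hℓ.1) → motive s f hf)
    {s : Finset V} {f : V → V} (hf : IsParentMap s r f) : motive s f hf := by
  induction s using Finset.strongInduction generalizing f with
  | _ s ih =>
  by_cases h : (s \ s.image f).Nonempty
  · have hℓ := isGreatest_max' _ h
    exact erase s f _ hf hℓ (ih _ (erase_ssubset (mem_sdiff.1 hℓ.1).1) (hf.erase_leaf hℓ.1))
  · rw [not_nonempty_iff_eq_empty] at h
    obtain rfl := hf.eq_singleton_of_sdiff_image_eq_empty h
    obtain rfl := hf.eq_id_of_singleton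
    exact singleton

lemma length_encode (hf : IsParentMap s r f) : (encode s f).length + 1 = #s := by
  induction hf using IsParentMap.encode_induction with
  | singleton => simp [encode_singleton_id]
  | erase s f ℓ hf hℓ ih =>
    have hℓs : ℓ ∈ s := (mem_sdiff.1 hℓ.1).1
    rw [encode_eq_cons hℓ, List.length_cons, ih, card_erase_of_mem hℓs]
    have := card_pos.2 ⟨ℓ, hℓs⟩
    omega

lemma insert_toFinset_encode (hf : IsParentMap s r f) :
    insert r (encode s f).toFinset = s.image f := by
  induction hf using IsParentMap.encode_induction with
  | singleton => simp [encode_singleton_id]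
  | erase s f ℓ hf hℓ ih =>
    have heq : Set.EqOn (update f ℓ ℓ) f (s.erase ℓ) := fun v hv =>
      update_of_ne (ne_of_mem_erase hv) _ _
    rw [encode_eq_cons hℓ, List.toFinset_cons, insert_comm, ih, image_congr heq,
      ← image_insert, insert_erase (mem_sdiff.1 hℓ.1).1]

lemma getLast_encode (hf : IsParentMap s r f) (hne : encode s f ≠ []) :
    (encode s f).getLast hne = r := by
  induction hf using IsParentMap.encode_induction with
  | singleton => exact absurd encode_singleton_id hne
  | erase s f ℓ hf hℓ ih =>
    obtain ⟨hℓs, hℓf⟩ := mem_sdiff.1 hℓ.1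
    simp only [encode_eq_cons hℓ] at hne ⊢
    by_cases hc : encode (s.erase ℓ) (update f ℓ ℓ) = []
    · have hf' := hf.erase_leaf hℓ.1
      have hsr : s.erase ℓ = {r} := by
        refine eq_singleton_of_mem_of_card_eq_one hf'.root_mem ?_
        simpa [hc] using (length_encode hf').symm
      have hfℓ : f ℓ ∈ s.erase ℓ :=
        mem_erase.2 ⟨fun h => hℓf (mem_image.2 ⟨ℓ, hℓs, h⟩), hf.mapsTo hℓs⟩
      simp only [hc, List.getLast_singleton]
      simpa [hsr] using hfℓ
    · rw [List.getLast_cons hc]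
      exact ih hc

lemma isCode_encode (hf : IsParentMap s r f) : IsCode r s (encode s f) where
  root_mem := hf.root_mem
  length_add_one := length_encode hf
  subset x hx := by
    have : x ∈ s.image f :=
      insert_toFinset_encode hf ▸ mem_insert_of_mem (List.mem_toFinset.2 hx)
    obtain ⟨v, hv, rfl⟩ := mem_image.1 this
    exact hf.mapsTo hv
  getLast_eq := getLast_encode hf

lemma toFinset_encode (hf : IsParentMap s r f) (hne : encode s f ≠ []) :
    (encode s f).toFinset = s.image f := by
  rw [← insert_toFinset_encode hf,
    insert_eq_of_mem (List.mem_toFinset.2 ((isCode_encode hf).mem_of_ne_nil hne))]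

lemma decode_encode (hf : IsParentMap s r f) : decode (encode s f) s = f := by
  induction hf using IsParentMap.encode_induction with
  | singleton => rw [encode_singleton_id, decode]
  | erase s f ℓ hf hℓ ih =>
    have hne : encode s f ≠ [] := by simp [encode_eq_cons hℓ]
    have htf := toFinset_encode hf hne
    rw [encode_eq_cons hℓ] at htf ⊢
    rw [decode_cons (htf ▸ hℓ), ih, update_idem, update_eq_self]

lemma isParentMap_decode {c : List V} (hc : IsCode r s c) : IsParentMap s r (decode c s) := by
  induction c generalizing s with
  | nil =>
    obtain rfl := hc.eq_singleton_of_nil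
    exact .singleton_id r
  | cons p c ih =>
    have hℓ := isGreatest_max' _ hc.sdiff_toFinset_nonempty
    obtain ⟨hℓs, hℓc⟩ := mem_sdiff.1 hℓ.1
    set ℓ := (s \ (p :: c).toFinset).max' _
    have hp : p ∈ s.erase ℓ := mem_erase.2
      ⟨fun h => hℓc (h ▸ List.mem_toFinset.2 List.mem_cons_self),
        hc.subset p List.mem_cons_self⟩
    have := (ih (hc.erase hℓ.1)).insert_leaf (notMem_erase ℓ s) hp
    rwa [insert_erase hℓs, ← decode_cons hℓ] at this

lemma encode_decode {c : List V} (hc : IsCode r s c) : encode s (decode c s) = c := by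
  induction c generalizing s with
  | nil =>
    obtain rfl := hc.eq_singleton_of_nil
    exact encode_singleton_id
  | cons p c ih =>
    have hℓ := isGreatest_max' _ hc.sdiff_toFinset_nonempty
    set ℓ := (s \ (p :: c).toFinset).max' _
    have hℓs : ℓ ∈ s := (mem_sdiff.1 hℓ.1).1
    have hc' := hc.erase hℓ.1
    have hg := isParentMap_decode hc'
    set g := decode c (s.erase ℓ)
    have heq : Set.EqOn (update g ℓ p) g (s.erase ℓ) := fun v hv =>
      update_of_ne (ne_of_mem_erase hv) _ _
    have himage : s.image (update g ℓ p) = (p :: c).toFinset := by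
      rw [← insert_erase hℓs, image_insert, update_self, image_congr heq,
        ← insert_toFinset_encode hg, ih hc', insert_comm, ← List.toFinset_cons,
        insert_eq_of_mem (List.mem_toFinset.2 (hc.mem_of_ne_nil (List.cons_ne_nil p c)))]
    have hgℓ : update (update g ℓ p) ℓ ℓ = g := by
      rw [update_idem, update_eq_self_iff, hg.apply_of_notMem ℓ (notMem_erase ℓ s)]
    rw [decode_cons hℓ, encode_eq_cons (himage ▸ hℓ), update_self, hgℓ, ih hc']

def equiv (r : V) (s : Finset V) : {f // IsParentMap s r f} ≃ {c // IsCode r s c} where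
  toFun f := ⟨encode s f, isCode_encode f.2⟩
  invFun c := ⟨decode c s, isParentMap_decode c.2⟩
  left_inv f := Subtype.ext (decode_encode f.2)
  right_inv c := Subtype.ext (encode_decode c.2)

end Coding

section Count

variable [Fintype V] (r : V)

lemma isCode_univ_iff {c : List V} :
    IsCode r univ c ↔ c.length + 1 = Fintype.card V ∧ ∀ h : c ≠ [], c.getLast h = r :=
  ⟨fun hc => ⟨hc.length_add_one, hc.getLast_eq⟩,
    fun ⟨hl, hr⟩ => ⟨mem_univ r, hl, fun x _ => mem_univ x, hr⟩⟩

def codeEquivVector (hV : 2 ≤ Fintype.card V) :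
    {c // IsCode r univ c} ≃ List.Vector V (Fintype.card V - 2) where
  toFun c := ⟨c.1.dropLast, by
    have := c.2.length_add_one
    simp only [List.length_dropLast]
    simp only [card_univ] at this
    omega⟩
  invFun l := ⟨l.1 ++ [r], (isCode_univ_iff r).2
    ⟨by simp only [List.length_append, l.2, List.length_singleton]; omega,
      fun _ => List.getLast_concat ..⟩⟩
  left_inv := fun ⟨c, hc⟩ => by
    have hne : c ≠ [] := fun h => by have := hc.length_add_one; simp [h] at this; omega
    exact Subtype.ext (by simp only; rw [← hc.getLast_eq hne, List.dropLast_append_getLast])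
  right_inv l := Subtype.ext List.dropLast_concat

theorem card_isCode_univ :
    Nat.card {c // IsCode r univ c} = Fintype.card V ^ (Fintype.card V - 2) := by
  by_cases hV : 2 ≤ Fintype.card V
  · rw [Nat.card_congr (codeEquivVector r hV), Nat.card_eq_fintype_card, card_vector]
  have h1 : Fintype.card V = 1 := by have := Fintype.card_pos_iff.2 ⟨r⟩; omega
  have : Unique {c // IsCode r univ c} :=
    { default := ⟨[], (isCode_univ_iff r).2 ⟨by simp [h1], fun h => absurd rfl h⟩⟩
      uniq := fun c => Subtype.ext <| List.eq_nil_of_length_eq_zero <| by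
        have := c.2.length_add_one
        simp only [card_univ, h1] at this
        omega }
  rw [Nat.card_unique, h1, Nat.one_pow]

end Count

end Prufer

def parentGraph (r : V) (f : V → V) : SimpleGraph V :=
  fromEdgeSet (Set.range fun v : {v // v ≠ r} => s(v.1, f v))

variable {r : V} {f : V → V}

lemma parentGraph_adj {a b : V} :
    (parentGraph r f).Adj a b ↔ a ≠ b ∧ (a ≠ r ∧ f a = b ∨ b ≠ r ∧ f b = a) := by
  simp only [parentGraph, fromEdgeSet_adj, Set.mem_range, Subtype.exists, Sym2.eq_iff]
  aesop

lemma reachable_parentGraph_of_iterate_eq {k : ℕ} {v : V} (h : f^[k] v = r) :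
    (parentGraph r f).Reachable v r := by
  induction k generalizing v with
  | zero => exact h ▸ Reachable.refl v
  | succ k ih =>
    by_cases hv : v = r
    · exact hv ▸ Reachable.refl v
    refine Reachable.trans ?_ (ih h)
    by_cases hfv : f v = v
    · rw [hfv]
    exact (parentGraph_adj.2 ⟨Ne.symm hfv, .inl ⟨hv, rfl⟩⟩).reachable

lemma SimpleGraph.Connected.exists_adj_dist_lt {G : SimpleGraph V} (hG : G.Connected) {v : V}
    (hvr : v ≠ r) : ∃ w, G.Adj v w ∧ G.dist w r < G.dist v r := by
  obtain ⟨p, hp⟩ := hG.exists_walk_length_eq_dist v r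
  have hnil : ¬p.Nil := fun h => hvr h.eq
  refine ⟨p.snd, p.adj_snd hnil, ?_⟩
  have := dist_le p.tail
  have := p.length_tail_add_one hnil
  omega

variable [Fintype V]

lemma IsParentMap.connected_parentGraph (hf : IsParentMap univ r f) :
    (parentGraph r f).Connected :=
  have : Nonempty V := ⟨r⟩
  .mk fun u v =>
    have hu := hf.exists_iterate_eq_root u (mem_univ u)
    have hv := hf.exists_iterate_eq_root v (mem_univ v)
    (reachable_parentGraph_of_iterate_eq hu.choose_spec).trans
      (reachable_parentGraph_of_iterate_eq hv.choose_spec).symm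

lemma IsParentMap.card_edgeSet_parentGraph (hf : IsParentMap univ r f) :
    Nat.card (parentGraph r f).edgeSet + 1 = Nat.card V := by
  have hdiag : Disjoint (Set.range fun v : {v // v ≠ r} => s(v.1, f v)) Sym2.diagSet := by
    rw [Set.disjoint_left]
    rintro _ ⟨⟨v, hv⟩, rfl⟩
    exact fun h => hf.apply_ne_self (mem_univ v) hv (Sym2.mk_isDiag_iff.1 h).symm
  have hinj : Injective fun v : {v // v ≠ r} => s(v.1, f v) := by
    rintro ⟨v, hv⟩ ⟨w, hw⟩ h
    rcases Sym2.eq_iff.1 h with ⟨rfl, -⟩ | ⟨rfl, hwv⟩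
    · rfl
    · exact absurd (hwv ▸ rfl) (hf.apply_apply_ne_self (mem_univ w) hw)
  classical
  rw [parentGraph, edgeSet_fromEdgeSet, hdiag.sdiff_eq_left, Nat.card_range_of_injective hinj,
    ← Nat.card_congr (Equiv.optionSubtypeNe r), Finite.card_option]

lemma IsParentMap.isTree_parentGraph (hf : IsParentMap univ r f) : (parentGraph r f).IsTree :=
  isTree_iff_connected_and_card.2 ⟨hf.connected_parentGraph, hf.card_edgeSet_parentGraph⟩

/-- If `f v ≠ g v`, the edge `{v, g v}` of the common graph forces `f (g v) = v`; at such a `v`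
of minimal `g`-depth this gives the impossible `g (g v) = v`. -/
lemma IsParentMap.eq_of_parentGraph_eq {g : V → V} (hf : IsParentMap univ r f)
    (hg : IsParentMap univ r g) (h : parentGraph r f = parentGraph r g) : f = g := by
  suffices ∀ d v, rootDepth r g v = d → f v = g v from funext fun v => this _ v rfl
  intro d
  induction d using Nat.strong_induction_on with
  | _ d ih =>
  rintro v rfl
  by_cases hvr : v = r
  · rw [hvr, hf.apply_root, hg.apply_root]
  have hadj : (parentGraph r f).Adj v (g v) :=
    h ▸ parentGraph_adj.2 ⟨(hg.apply_ne_self (mem_univ v) hvr).symm, .inl ⟨hvr, rfl⟩⟩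
  rcases (parentGraph_adj.1 hadj).2 with ⟨-, hfv⟩ | ⟨-, hfgv⟩
  · exact hfv
  · have hdepth := hg.rootDepth_eq_rootDepth_apply_add_one (mem_univ v) hvr
    have := ih _ (by omega) (g v) rfl
    exact absurd (hfgv ▸ this).symm (hg.apply_apply_ne_self (mem_univ v) hvr)

lemma SimpleGraph.Connected.exists_isParentMap_parentGraph_le {G : SimpleGraph V}
    (hG : G.Connected) (r : V) : ∃ f, IsParentMap univ r f ∧ parentGraph r f ≤ G := by
  classical
  choose! p hp using fun v (hvr : v ≠ r) => hG.exists_adj_dist_lt hvr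
  have hpr : ∀ v ≠ r, update p r r v = p v := fun v hvr => update_of_ne hvr _ _
  refine ⟨update p r r, isParentMap_univ_iff.2 ⟨update_self .., fun v => ?_⟩, ?_⟩
  · induction hd : G.dist v r using Nat.strong_induction_on generalizing v with
    | _ d ih =>
    by_cases hvr : v = r
    · exact ⟨0, hvr⟩
    obtain ⟨k, hk⟩ := ih _ (hd ▸ (hp v hvr).2) (p v) rfl
    exact ⟨k + 1, by rwa [iterate_succ_apply, hpr v hvr]⟩
  · intro a b hab
    rcases (parentGraph_adj.1 hab).2 with ⟨har, rfl⟩ | ⟨hbr, rfl⟩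
    · exact hpr a har ▸ (hp a har).1
    · exact (hpr b hbr ▸ (hp b hbr).1).symm

theorem card_isTree_eq_card_isParentMap (r : V) :
    Nat.card {H : SimpleGraph V // H.IsTree} = Nat.card {f // IsParentMap univ r f} := by
  refine (Nat.card_eq_of_bijective (fun f => ⟨parentGraph r f.1, f.2.isTree_parentGraph⟩)
    ⟨fun f g h => Subtype.ext (f.2.eq_of_parentGraph_eq g.2 (congrArg Subtype.val h)),
      fun H => ?_⟩).symm
  obtain ⟨f, hf, hle⟩ := H.2.connected.exists_isParentMap_parentGraph_le r
  exact ⟨⟨f, hf⟩, Subtype.ext ((isTree_iff_minimal_connected.1 H.2).eq_of_le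
    hf.connected_parentGraph hle)⟩

theorem card_isTree [Nonempty V] :
    Nat.card {H : SimpleGraph V // H.IsTree} = Fintype.card V ^ (Fintype.card V - 2) := by
  -- Prüfer coding needs some order on the vertices to choose which leaf to delete.
  let : LinearOrder V := LinearOrder.lift' _ (Fintype.equivFin V).injective
  obtain ⟨r⟩ := ‹Nonempty V›
  rw [card_isTree_eq_card_isParentMap r, Nat.card_congr (Prufer.equiv r univ),
    Prufer.card_isCode_univ]

/-- Cayley's formula: the number of labeled trees on `n ≥ 1` vertices,
i.e. the number of spanning trees of the complete graph `K_n`, is `n^(n−2)`. -/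
theorem cayley_formula (n : ℕ) (hn : 1 ≤ n) :
    Nat.card {H : SimpleGraph (Fin n) // H.IsTree} = n ^ (n - 2) := by
  have : Nonempty (Fin n) := ⟨⟨0, hn⟩⟩
  simpa using card_isTree (V := Fin n)
end

section
/- For all integers m, n ≥ 1, the number of spanning trees of the complete bipartite graph K_{m,n} equals m^{n−1} · n^{m−1}. -/
/-!
Refine the count by degrees. Write a degree sequence as `d x + 1`; if `∑ a ∈ S, d a = #T - 1`
and `∑ b ∈ T, d b = #S - 1`, the number of spanning trees of the complete bipartite graph on the
parts `S`, `T` with these degrees is `multinomial S d * multinomial T d`. Indeed some vertex `v`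
has `d v = 0`, i.e. is a leaf of every such tree; sorting the trees by the neighbour `u` of `v`
and deleting the edge `uv` turns the count into the Pascal recursion of the multinomial
coefficient. Summing over all degree sequences with the multinomial theorem gives
`#S ^ (#T - 1) * #T ^ (#S - 1)`.
-/

open Finset SimpleGraph
open scoped Nat

namespace Nat

variable {α : Type*} [DecidableEq α]

theorem multinomial_eq_sum_multinomial_update {s : Finset α} {f : α → ℕ} (hf : ∑ i ∈ s, f i ≠ 0) :
    multinomial s f = ∑ a ∈ s with f a ≠ 0, multinomial s (Function.update f a (f a - 1)) := by
  have key : ∀ a ∈ s, f a ≠ 0 → (∏ i ∈ s, (f i)!) * multinomial s (Function.update f a (f a - 1)) =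
      f a * (∑ i ∈ s, f i - 1)! := by
    intro a ha hfa
    set g := Function.update f a (f a - 1) with hg_def
    have hsum : ∑ i ∈ s, g i = ∑ i ∈ s, f i - 1 := by
      rw [sum_update_of_mem ha, ← add_sum_erase s f ha, erase_eq]
      omega
    have hprod : ∏ i ∈ s, (f i)! = f a * ∏ i ∈ s, (g i)! := by
      have hg : ∀ i ∈ s.erase a, (g i)! = (f i)! := fun i hi => by
        rw [hg_def, Function.update_of_ne (ne_of_mem_erase hi)]
      rw [← mul_prod_erase s _ ha, ← mul_prod_erase s (fun i => (g i)!) ha, prod_congr rfl hg,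
        hg_def, Function.update_self, ← mul_assoc, mul_factorial_pred hfa]
    rw [hprod, mul_assoc, multinomial_spec, hsum]
  apply Nat.eq_of_mul_eq_mul_left (prod_pos fun i _ => (f i).factorial_pos)
  rw [multinomial_spec, mul_sum,
    sum_congr rfl fun a ha => key a (mem_filter.1 ha).1 (mem_filter.1 ha).2, ← sum_mul,
    sum_filter_ne_zero, mul_factorial_pred hf]

theorem sum_multinomial_piAntidiag (s : Finset α) (n : ℕ) :
    ∑ k ∈ piAntidiag s n, multinomial s k = #s ^ n := by
  simpa using (sum_pow_eq_sum_piAntidiag (R := ℕ) s (fun _ => 1) n).symm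

end Nat

theorem SimpleGraph.le_completeBipartiteGraph_iff {α β : Type*} {H : SimpleGraph (α ⊕ β)} :
    H ≤ completeBipartiteGraph α β ↔ ∀ e ∈ H.edgeSet, ∃ a b, e = s(.inl a, .inr b) := by
  constructor
  · intro hle e he
    induction e using Sym2.ind with
    | h x y =>
      have hxy := hle he
      rcases x with a | b <;> rcases y with a' | b' <;> simp_all [Sym2.eq_swap]
  · intro h x y hxy
    obtain ⟨a, b, hab⟩ := h s(x, y) hxy
    rcases Sym2.eq_iff.1 hab with ⟨rfl, rfl⟩ | ⟨rfl, rfl⟩ <;> simp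

namespace BipartiteSpanningTree

variable {V : Type*} [DecidableEq V]

def edgeDegree (E : Finset (Sym2 V)) (x : V) : ℕ := #{e ∈ E | x ∈ e}

/-- A spanning tree of the complete bipartite graph with parts `S` and `T`, given by its edge set.
A connected graph is a tree iff it has one edge fewer than vertices, so no acyclicity is needed. -/
structure IsTreeOn (S T : Finset V) (E : Finset (Sym2 V)) : Prop where
  edge_mem : ∀ e ∈ E, ∃ a ∈ S, ∃ b ∈ T, e = s(a, b)
  reachable : ∀ x ∈ S ∪ T, ∀ y ∈ S ∪ T, (fromEdgeSet (E : Set (Sym2 V))).Reachable x y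
  card_add_one : #E + 1 = #S + #T

variable {S T : Finset V} {E : Finset (Sym2 V)} {u v x y : V} {d : V → ℕ}

lemma edgeDegree_insert {e : Sym2 V} (he : e ∉ E) :
    edgeDegree (insert e E) x = edgeDegree E x + if x ∈ e then 1 else 0 := by
  unfold edgeDegree
  split_ifs with hx
  · rw [filter_insert, if_pos hx, card_insert_of_notMem (fun h => he (mem_filter.1 h).1)]
  · rw [filter_insert, if_neg hx, add_zero]

lemma eq_of_edgeDegree_eq_one (h : edgeDegree E x = 1) {e e' : Sym2 V} (he : e ∈ E) (he' : e' ∈ E)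
    (hx : x ∈ e) (hx' : x ∈ e') : e = e' :=
  card_le_one.1 h.le e (mem_filter.2 ⟨he, hx⟩) e' (mem_filter.2 ⟨he', hx'⟩)

lemma notMem_union_erase (hST : Disjoint S T) (hv : v ∈ T) : v ∉ S ∪ T.erase v := by
  simpa using Finset.disjoint_right.1 hST hv

lemma IsTreeOn.symm (h : IsTreeOn S T E) : IsTreeOn T S E where
  edge_mem e he := by
    obtain ⟨a, ha, b, hb, rfl⟩ := h.edge_mem e he
    exact ⟨b, hb, a, ha, Sym2.eq_swap⟩
  reachable x hx y hy := h.reachable x (union_comm S T ▸ hx) y (union_comm S T ▸ hy)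
  card_add_one := by rw [h.card_add_one, add_comm]

lemma IsTreeOn.edgeDegree_pos (h : IsTreeOn S T E) (hx : x ∈ S ∪ T) (hy : y ∈ S ∪ T)
    (hxy : x ≠ y) : 0 < edgeDegree E x := by
  obtain ⟨p⟩ := h.reachable x hx y hy
  have hadj := p.adj_snd (SimpleGraph.Walk.not_nil_of_ne hxy)
  exact card_pos.2 ⟨_, mem_filter.2 ⟨((fromEdgeSet_adj _).1 hadj).1, Sym2.mem_mk_left _ _⟩⟩

lemma IsTreeOn.mem_union (h : IsTreeOn S T E) {e : Sym2 V} (he : e ∈ E) (hx : x ∈ e) :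
    x ∈ S ∪ T := by
  obtain ⟨a, ha, b, hb, rfl⟩ := h.edge_mem e he
  rcases Sym2.mem_iff.1 hx with rfl | rfl
  · exact mem_union_left _ ha
  · exact mem_union_right _ hb

lemma IsTreeOn.edgeDegree_eq_zero (h : IsTreeOn S T E) (hx : x ∉ S ∪ T) :
    edgeDegree E x = 0 :=
  card_eq_zero.2 (filter_eq_empty_iff.2 fun _ he hxe => hx (h.mem_union he hxe))

lemma sum_edgeDegree (hST : Disjoint S T) (hE : ∀ e ∈ E, ∃ a ∈ S, ∃ b ∈ T, e = s(a, b)) :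
    ∑ a ∈ S, edgeDegree E a = #E := by
  rw [card_eq_sum_ones]
  refine (sum_card_bipartiteAbove_eq_sum_card_bipartiteBelow (r := fun x e => x ∈ e)).trans
    (sum_congr rfl fun e he => ?_)
  obtain ⟨a, ha, b, hb, rfl⟩ := hE e he
  have hbS : b ∉ S := Finset.disjoint_right.1 hST hb
  rw [card_eq_one]
  refine ⟨a, eq_singleton_iff_unique_mem.2
    ⟨mem_filter.2 ⟨ha, Sym2.mem_mk_left _ _⟩, fun x hx => ?_⟩⟩
  obtain ⟨hxS, hx⟩ := mem_filter.1 hx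
  rcases Sym2.mem_iff.1 hx with rfl | rfl
  · rfl
  · exact absurd hxS hbS

lemma IsTreeOn.erase_leaf (h : IsTreeOn S T E) (hST : Disjoint S T) (hv : v ∈ T) (huv : s(u, v) ∈ E)
    (hleaf : edgeDegree E v = 1) : IsTreeOn S (T.erase v) (E.erase s(u, v)) where
  edge_mem e he := by
    obtain ⟨hne, heE⟩ := mem_erase.1 he
    obtain ⟨a, ha, b, hb, rfl⟩ := h.edge_mem e heE
    refine ⟨a, ha, b, mem_erase.2 ⟨?_, hb⟩, rfl⟩
    rintro rfl
    exact hne (eq_of_edgeDegree_eq_one hleaf heE huv (Sym2.mem_mk_right _ _)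
      (Sym2.mem_mk_right _ _))
  reachable x hx y hy := by
    have hx' : x ∈ S ∪ T := union_subset_union_right (erase_subset v T) hx
    have hy' : y ∈ S ∪ T := union_subset_union_right (erase_subset v T) hy
    have hvS := notMem_union_erase hST hv
    have hvx : v ≠ x := by rintro rfl; exact hvS hx
    have hvy : v ≠ y := by rintro rfl; exact hvS hy
    obtain ⟨p, hp⟩ := (h.reachable x hx' y hy').exists_isPath
    have hnbr : ((fromEdgeSet (E : Set (Sym2 V))).neighborSet v).Subsingleton := by
      intro w hw w' hw'
      exact Sym2.congr_right.1 (eq_of_edgeDegree_eq_one hleaf ((fromEdgeSet_adj _).1 hw).1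
        ((fromEdgeSet_adj _).1 hw').1 (Sym2.mem_mk_left _ _) (Sym2.mem_mk_left _ _))
    have hvp := hp.isTrail.not_mem_support_of_subsingleton_neighborSet hvx hvy hnbr
    refine ⟨p.transfer _ fun e he => ?_⟩
    have heE := p.edges_subset_edgeSet he
    have hne : e ≠ s(u, v) := by
      rintro rfl
      exact hvp (p.snd_mem_support_of_mem_edges he)
    simp only [SimpleGraph.edgeSet_fromEdgeSet, coe_erase, Set.mem_sdiff, mem_coe,
      Set.mem_singleton_iff] at heE ⊢
    exact ⟨⟨heE.1, hne⟩, heE.2⟩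
  card_add_one := by
    have := h.card_add_one
    have := card_pos.2 ⟨_, huv⟩
    have := card_pos.2 ⟨_, hv⟩
    rw [card_erase_of_mem huv, card_erase_of_mem hv]
    omega

lemma IsTreeOn.insert_leaf (h : IsTreeOn S T E) (hu : u ∈ S) (hv : v ∉ S ∪ T) :
    IsTreeOn S (insert v T) (insert s(u, v) E) where
  edge_mem e he := by
    rcases mem_insert.1 he with rfl | he
    · exact ⟨u, hu, v, mem_insert_self v T, rfl⟩
    · obtain ⟨a, ha, b, hb, rfl⟩ := h.edge_mem e he
      exact ⟨a, ha, b, mem_insert_of_mem hb, rfl⟩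
  reachable := by
    have hle : fromEdgeSet (E : Set (Sym2 V)) ≤ fromEdgeSet (insert s(u, v) E : Finset (Sym2 V)) :=
      fromEdgeSet_mono (by simp)
    have hreach : ∀ x ∈ S ∪ insert v T,
        (fromEdgeSet (insert s(u, v) E : Finset (Sym2 V)) : SimpleGraph V).Reachable x u := by
      intro x hx
      by_cases hxv : x = v
      · subst hxv
        refine Adj.reachable ((fromEdgeSet_adj _).2 ⟨by simp [Sym2.eq_swap], ?_⟩)
        rintro rfl
        exact hv (mem_union_left _ hu)
      · have hx' : x ∈ S ∪ T := by simp_all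
        exact (h.reachable x hx' u (mem_union_left _ hu)).mono hle
    exact fun x hx y hy => (hreach x hx).trans (hreach y hy).symm
  card_add_one := by
    have hvT : v ∉ T := fun hvT => hv (mem_union_right _ hvT)
    have huv : s(u, v) ∉ E := fun huv => hv (h.mem_union huv (Sym2.mem_mk_right _ _))
    rw [card_insert_of_notMem huv, card_insert_of_notMem hvT, ← add_assoc, h.card_add_one]

lemma isTreeOn_singleton_empty (a : V) : IsTreeOn {a} ∅ (∅ : Finset (Sym2 V)) where
  edge_mem := by simp
  reachable x hx y hy := by simp_all
  card_add_one := rfl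

lemma IsTreeOn.exists_leaf_edge (h : IsTreeOn S T E) (hST : Disjoint S T) (hv : v ∈ T)
    (hleaf : edgeDegree E v = 1) : ∃ u ∈ S, s(u, v) ∈ E := by
  obtain ⟨e, he⟩ := card_eq_one.1 hleaf
  obtain ⟨heE, hve⟩ := mem_filter.1 (he ▸ mem_singleton_self e)
  obtain ⟨a, ha, b, hb, rfl⟩ := h.edge_mem e heE
  rcases Sym2.mem_iff.1 hve with rfl | rfl
  · exact absurd hv (Finset.disjoint_left.1 hST ha)
  · exact ⟨a, ha, heE⟩

lemma IsTreeOn.one_lt_edgeDegree_of_leaf (h : IsTreeOn S T E) (hST : Disjoint S T) (hu : u ∈ S)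
    (hv : v ∈ T) (hT : 2 ≤ #T) (huv : s(u, v) ∈ E) (hleaf : edgeDegree E v = 1) :
    1 < edgeDegree E u := by
  obtain ⟨w, hw⟩ : (T.erase v).Nonempty := by
    rw [← card_pos, card_erase_of_mem hv]; omega
  have hwu : u ≠ w := fun huw => Finset.disjoint_left.1 hST hu (mem_of_mem_erase (huw ▸ hw))
  have hpos := (h.erase_leaf hST hv huv hleaf).edgeDegree_pos (mem_union_left _ hu)
    (mem_union_right _ hw) hwu
  have hins := edgeDegree_insert (x := u) (notMem_erase s(u, v) E)
  rw [insert_erase huv, if_pos (Sym2.mem_mk_left _ _)] at hins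
  omega

lemma edgeDegree_insert_leaf_iff {F : Finset (Sym2 V)} (hST : Disjoint S T) (hv : v ∈ T)
    (hdu : d u ≠ 0) (hdv : d v = 0) (huv : s(u, v) ∉ F) (hFv : edgeDegree F v = 0) :
    (∀ x ∈ S ∪ T, edgeDegree (insert s(u, v) F) x = d x + 1) ↔
      ∀ x ∈ S ∪ T.erase v, edgeDegree F x = Function.update d u (d u - 1) x + 1 := by
  have hvS := notMem_union_erase hST hv
  have hpointwise : ∀ x ∈ S ∪ T.erase v, edgeDegree (insert s(u, v) F) x = d x + 1 ↔
      edgeDegree F x = Function.update d u (d u - 1) x + 1 := by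
    intro x hx
    have hxv : x ≠ v := by rintro rfl; exact hvS hx
    rw [edgeDegree_insert huv]
    by_cases hxu : x = u
    · subst hxu
      rw [if_pos (Sym2.mem_mk_left _ _), Function.update_self]
      omega
    · rw [if_neg (by simp [hxu, hxv]), Function.update_of_ne hxu, add_zero]
  have hleaf : edgeDegree (insert s(u, v) F) v = d v + 1 := by
    rw [edgeDegree_insert huv, if_pos (Sym2.mem_mk_right _ _), hFv, hdv]
  conv_lhs => rw [← insert_erase hv, union_insert, forall_mem_insert]
  rw [and_iff_right hleaf]
  exact forall₂_congr hpointwise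

lemma IsTreeOn.sum_edgeDegree_sub_one (h : IsTreeOn S T E) (hST : Disjoint S T)
    (hpos : ∀ a ∈ S, 0 < edgeDegree E a) : ∑ a ∈ S, (edgeDegree E a - 1) = #T - 1 := by
  have hsplit : ∑ a ∈ S, (edgeDegree E a - 1) + #S = #E := by
    rw [card_eq_sum_ones, ← sum_add_distrib, ← sum_edgeDegree hST h.edge_mem]
    exact sum_congr rfl fun a ha => Nat.sub_add_cancel (hpos a ha)
  have := h.card_add_one
  omega

lemma IsTreeOn.forall_edgeDegree_pos (h : IsTreeOn S T E) (hST : Disjoint S T) (hS : S.Nonempty)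
    (hT : T.Nonempty) : ∀ x ∈ S ∪ T, 0 < edgeDegree E x := by
  intro x hx
  have hcard : 2 ≤ #(S ∪ T) := by
    rw [card_union_of_disjoint hST]
    have := hS.card_pos
    have := hT.card_pos
    omega
  obtain ⟨y, hy, hyx⟩ := exists_mem_ne hcard x
  exact h.edgeDegree_pos hx hy hyx.symm

def excessDegrees (S T : Finset V) (E : Finset (Sym2 V)) : (V → ℕ) × (V → ℕ) :=
  (fun x => if x ∈ S then edgeDegree E x - 1 else 0,
    fun x => if x ∈ T then edgeDegree E x - 1 else 0)

lemma IsTreeOn.excessDegrees_mem (h : IsTreeOn S T E) (hST : Disjoint S T)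
    (hpos : ∀ x ∈ S ∪ T, 0 < edgeDegree E x) :
    excessDegrees S T E ∈ piAntidiag S (#T - 1) ×ˢ piAntidiag T (#S - 1) := by
  refine mem_product.2
    ⟨mem_piAntidiag.2 ⟨?_, fun x hx => ?_⟩, mem_piAntidiag.2 ⟨?_, fun x hx => ?_⟩⟩
  · exact (sum_congr rfl fun a ha => if_pos ha).trans
      (h.sum_edgeDegree_sub_one hST fun a ha => hpos a (mem_union_left _ ha))
  · by_contra hxS
    exact hx (if_neg hxS)
  · exact (sum_congr rfl fun b hb => if_pos hb).trans
      (h.symm.sum_edgeDegree_sub_one hST.symm fun b hb => hpos b (mem_union_right _ hb))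
  · by_contra hxT
    exact hx (if_neg hxT)

lemma excessDegrees_eq_iff {d₁ d₂ : V → ℕ} (hST : Disjoint S T)
    (hpos : ∀ x ∈ S ∪ T, 0 < edgeDegree E x) (hd₁ : ∀ x ∉ S, d₁ x = 0) (hd₂ : ∀ x ∉ T, d₂ x = 0) :
    excessDegrees S T E = (d₁, d₂) ↔ ∀ x ∈ S ∪ T, edgeDegree E x = (d₁ + d₂) x + 1 := by
  simp only [excessDegrees, Prod.ext_iff, funext_iff, Pi.add_apply]
  constructor
  · rintro ⟨e₁, e₂⟩ x hx
    have := hpos x hx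
    specialize e₁ x
    specialize e₂ x
    rcases mem_union.1 hx with hxS | hxT
    · simp only [hxS, Finset.disjoint_left.1 hST hxS, if_true, if_false] at e₁ e₂
      omega
    · simp only [hxT, Finset.disjoint_right.1 hST hxT, if_true, if_false] at e₁ e₂
      omega
  · intro hdeg
    refine ⟨fun x => ?_, fun x => ?_⟩
    · by_cases hxS : x ∈ S
      · simp [hxS, hdeg x (mem_union_left _ hxS), hd₂ x (Finset.disjoint_left.1 hST hxS)]
      · simp [hxS, hd₁ x hxS]
    · by_cases hxT : x ∈ T
      · simp [hxT, hdeg x (mem_union_right _ hxT), hd₁ x (Finset.disjoint_right.1 hST hxT)]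
      · simp [hxT, hd₂ x hxT]

lemma IsTreeOn.edgeSet_fromEdgeSet (h : IsTreeOn S T E) (hST : Disjoint S T) :
    (fromEdgeSet (E : Set (Sym2 V))).edgeSet = E := by
  rw [SimpleGraph.edgeSet_fromEdgeSet, sdiff_eq_left, Set.disjoint_left]
  intro e he hdiag
  obtain ⟨a, ha, b, hb, rfl⟩ := h.edge_mem e he
  exact Finset.disjoint_left.1 hST ha (Sym2.mk_isDiag_iff.1 hdiag ▸ hb)

section Counting

open scoped Classical

variable [Fintype V]

noncomputable def treeCount (S T : Finset V) (d : V → ℕ) : ℕ :=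
  #{E : Finset (Sym2 V) | IsTreeOn S T E ∧ ∀ x ∈ S ∪ T, edgeDegree E x = d x + 1}

lemma treeCount_comm : treeCount S T d = treeCount T S d := by
  unfold treeCount
  congr 1
  refine filter_congr fun E _ => ?_
  rw [union_comm]
  exact and_congr_left' ⟨IsTreeOn.symm, IsTreeOn.symm⟩

lemma treeCount_singleton {a b : V} (hab : a ≠ b) (ha : d a = 0) (hb : d b = 0) :
    treeCount {a} {b} d = 1 := by
  refine card_eq_one.2 ⟨{s(a, b)}, eq_singleton_iff_unique_mem.2 ⟨?_, fun E hE => ?_⟩⟩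
  · have h := (isTreeOn_singleton_empty a).insert_leaf (v := b) (mem_singleton_self a)
      (by simpa using hab.symm)
    rw [insert_empty, insert_empty] at h
    refine mem_filter.2 ⟨mem_univ _, h, fun x hx => ?_⟩
    rcases mem_union.1 hx with hx | hx <;> rw [mem_singleton.1 hx] <;>
      simp [edgeDegree, filter_singleton, ha, hb]
  · obtain ⟨h, -⟩ := (mem_filter.1 hE).2
    have hsub : E ⊆ {s(a, b)} := fun e he => by
      obtain ⟨x, hx, y, hy, rfl⟩ := h.edge_mem e he
      rw [mem_singleton.1 hx, mem_singleton.1 hy]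
      exact mem_singleton_self _
    have := h.card_add_one
    exact eq_of_subset_of_card_le hsub (by simp_all)

lemma card_filter_mem_eq_treeCount (hST : Disjoint S T) (hu : u ∈ S) (hv : v ∈ T)
    (hdu : d u ≠ 0) (hdv : d v = 0) :
    #{E : Finset (Sym2 V) | (IsTreeOn S T E ∧ ∀ x ∈ S ∪ T, edgeDegree E x = d x + 1) ∧
      s(u, v) ∈ E} = treeCount S (T.erase v) (Function.update d u (d u - 1)) := by
  have hvS := notMem_union_erase hST hv
  refine card_bij' (fun E _ => E.erase s(u, v)) (fun F _ => insert s(u, v) F) ?_ ?_ ?_ ?_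
  · intro E hE
    simp only [mem_filter, mem_univ, true_and] at hE ⊢
    obtain ⟨⟨h, hdeg⟩, huv⟩ := hE
    have h' := h.erase_leaf hST hv huv (by rw [hdeg v (mem_union_right _ hv), hdv])
    refine ⟨h', (edgeDegree_insert_leaf_iff hST hv hdu hdv (notMem_erase _ _)
      (h'.edgeDegree_eq_zero hvS)).1 ?_⟩
    rwa [insert_erase huv]
  · intro F hF
    simp only [mem_filter, mem_univ, true_and] at hF ⊢
    obtain ⟨h, hdeg⟩ := hF
    have huv : s(u, v) ∉ F := fun huv => hvS (h.mem_union huv (Sym2.mem_mk_right _ _))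
    have h' := h.insert_leaf hu hvS
    rw [insert_erase hv] at h'
    exact ⟨⟨h', (edgeDegree_insert_leaf_iff hST hv hdu hdv huv
      (h.edgeDegree_eq_zero hvS)).2 hdeg⟩, mem_insert_self _ _⟩
  · intro E hE
    exact insert_erase (mem_filter.1 hE).2.2
  · intro F hF
    exact erase_insert fun huv => hvS ((mem_filter.1 hF).2.1.mem_union huv (Sym2.mem_mk_right _ _))

lemma treeCount_eq_sum_treeCount_erase (hST : Disjoint S T) (hv : v ∈ T) (hdv : d v = 0)
    (hT : 2 ≤ #T) :
    treeCount S T d =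
      ∑ u ∈ S with d u ≠ 0, treeCount S (T.erase v) (Function.update d u (d u - 1)) := by
  set A : Finset (Finset (Sym2 V)) := {E | IsTreeOn S T E ∧ ∀ x ∈ S ∪ T, edgeDegree E x = d x + 1}
  have hleaf : ∀ E ∈ A, edgeDegree E v = 1 := fun E hE => by
    rw [(mem_filter.1 hE).2.2 v (mem_union_right _ hv), hdv]
  have hcover : A = {u ∈ S | d u ≠ 0}.biUnion fun u => {E ∈ A | s(u, v) ∈ E} := by
    ext E
    simp only [mem_biUnion, mem_filter]
    refine ⟨fun hE => ?_, fun ⟨_, _, hE, _⟩ => hE⟩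
    obtain ⟨h, hdeg⟩ := (mem_filter.1 hE).2
    obtain ⟨u, hu, huv⟩ := h.exists_leaf_edge hST hv (hleaf E hE)
    have := h.one_lt_edgeDegree_of_leaf hST hu hv hT huv (hleaf E hE)
    rw [hdeg u (mem_union_left _ hu)] at this
    exact ⟨u, ⟨hu, by omega⟩, hE, huv⟩
  have hdisj : Set.PairwiseDisjoint ↑({u ∈ S | d u ≠ 0} : Finset V)
      fun u => {E ∈ A | s(u, v) ∈ E} := by
    intro u _ u' _ hne
    refine Finset.disjoint_left.2 fun E hE hE' => hne ?_
    obtain ⟨hEA, huv⟩ := mem_filter.1 hE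
    exact Sym2.congr_left.1 (eq_of_edgeDegree_eq_one (hleaf E hEA) huv (mem_filter.1 hE').2
      (Sym2.mem_mk_right _ _) (Sym2.mem_mk_right _ _))
  rw [show treeCount S T d = #A from rfl, hcover, card_biUnion hdisj]
  refine sum_congr rfl fun u hu => ?_
  obtain ⟨hu, hdu⟩ := mem_filter.1 hu
  rw [filter_filter]
  exact card_filter_mem_eq_treeCount hST hu hv hdu hdv

theorem treeCount_eq_multinomial (hST : Disjoint S T) (hS : ∑ a ∈ S, d a + 1 = #T)
    (hT : ∑ b ∈ T, d b + 1 = #S) : treeCount S T d = Nat.multinomial S d * Nat.multinomial T d := by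
  induction hn : #S + #T using Nat.strong_induction_on generalizing S T d with
  | _ n ih =>
  obtain ⟨v, hv, hdv⟩ : ∃ v ∈ S ∪ T, d v < 1 := by
    refine exists_lt_of_sum_lt ?_
    rw [sum_const, smul_eq_mul, mul_one, sum_union hST, card_union_of_disjoint hST]
    omega
  rw [Nat.lt_one_iff] at hdv
  wlog hvT : v ∈ T generalizing S T
  · rw [treeCount_comm, mul_comm]
    exact this hST.symm hT hS (by rwa [add_comm]) (union_comm S T ▸ hv)
      ((mem_union.1 hv).resolve_right hvT)
  obtain hT1 | hT2 : #T = 1 ∨ 2 ≤ #T := by have := card_pos.2 ⟨v, hvT⟩; omega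
  · obtain ⟨b, rfl⟩ := card_eq_one.1 hT1
    obtain rfl := mem_singleton.1 hvT
    obtain ⟨a, rfl⟩ : ∃ a, S = {a} := card_eq_one.1 (by simpa [hdv] using hT.symm)
    have hab : a ≠ v := fun h => Finset.disjoint_left.1 hST (mem_singleton_self a) (by simp [h])
    rw [treeCount_singleton hab (by simpa using hS) hdv]
    simp
  · have hsum : ∑ a ∈ S, d a ≠ 0 := by omega
    rw [treeCount_eq_sum_treeCount_erase hST hvT hdv hT2,
      Nat.multinomial_eq_sum_multinomial_update hsum, sum_mul]
    refine sum_congr rfl fun u hu => ?_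
    obtain ⟨hu, hdu⟩ := mem_filter.1 hu
    have huT : u ∉ T := Finset.disjoint_left.1 hST hu
    have hupd : ∀ b ∈ T, Function.update d u (d u - 1) b = d b := fun b hb =>
      Function.update_of_ne (by rintro rfl; exact huT hb) _ _
    have hmult :
        Nat.multinomial (T.erase v) (Function.update d u (d u - 1)) = Nat.multinomial T d :=
      Nat.multinomial_congr_of_sdiff (erase_subset v T)
        (fun b hb => by rw [sdiff_erase_self hvT, mem_singleton] at hb; rwa [hb])
        fun b hb => hupd b (mem_of_mem_erase hb)
    rw [← hmult]
    refine ih _ ?_ (hST.mono_right (erase_subset v T)) ?_ ?_ rfl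
    · rw [card_erase_of_mem hvT]; omega
    · rw [sum_update_of_mem hu, card_erase_of_mem hvT, ← hS, ← add_sum_erase S d hu, erase_eq]
      omega
    · rw [sum_congr rfl fun b hb => hupd b (mem_of_mem_erase hb), sum_erase T hdv, hT]

theorem card_isTreeOn (hST : Disjoint S T) (hS : S.Nonempty) (hT : T.Nonempty) :
    #{E : Finset (Sym2 V) | IsTreeOn S T E} = #S ^ (#T - 1) * #T ^ (#S - 1) := by
  have hmaps : Set.MapsTo (excessDegrees S T) ({E | IsTreeOn S T E} : Finset (Finset (Sym2 V)))
      (piAntidiag S (#T - 1) ×ˢ piAntidiag T (#S - 1) : Finset _) := fun E hE => by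
    have h := (mem_filter.1 hE).2
    exact h.excessDegrees_mem hST (h.forall_edgeDegree_pos hST hS hT)
  rw [card_eq_sum_card_fiberwise hmaps, sum_product, ← Nat.sum_multinomial_piAntidiag,
    ← Nat.sum_multinomial_piAntidiag, sum_mul_sum]
  refine sum_congr rfl fun d₁ hd₁ => sum_congr rfl fun d₂ hd₂ => ?_
  obtain ⟨hsum₁, hsupp₁⟩ := mem_piAntidiag.1 hd₁
  obtain ⟨hsum₂, hsupp₂⟩ := mem_piAntidiag.1 hd₂
  have h₁ : ∀ x ∉ S, d₁ x = 0 := fun x hx => by_contra fun h => hx (hsupp₁ x h)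
  have h₂ : ∀ x ∉ T, d₂ x = 0 := fun x hx => by_contra fun h => hx (hsupp₂ x h)
  have hS₁ : ∀ a ∈ S, (d₁ + d₂) a = d₁ a := fun a ha => by
    simp [h₂ a (Finset.disjoint_left.1 hST ha)]
  have hT₂ : ∀ b ∈ T, (d₁ + d₂) b = d₂ b := fun b hb => by
    simp [h₁ b (Finset.disjoint_right.1 hST hb)]
  have hfiber : #{E ∈ ({E | IsTreeOn S T E} : Finset (Finset (Sym2 V))) |
      excessDegrees S T E = (d₁, d₂)} = treeCount S T (d₁ + d₂) := by
    rw [treeCount, filter_filter]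
    congr 1
    exact filter_congr fun E _ => and_congr_right fun h =>
      excessDegrees_eq_iff hST (h.forall_edgeDegree_pos hST hS hT) h₁ h₂
  rw [hfiber, treeCount_eq_multinomial hST ?_ ?_, Nat.multinomial_congr hS₁,
    Nat.multinomial_congr hT₂]
  · rw [sum_congr rfl hS₁, hsum₁]
    have := hT.card_pos
    omega
  · rw [sum_congr rfl hT₂, hsum₂]
    have := hS.card_pos
    omega

lemma isTreeOn_edgeFinset_iff (G : SimpleGraph V) [DecidableRel G.Adj] (hST : Disjoint S T)
    (huniv : S ∪ T = univ) :
    IsTreeOn S T G.edgeFinset ↔ G.IsTree ∧ ∀ e ∈ G.edgeSet, ∃ a ∈ S, ∃ b ∈ T, e = s(a, b) := by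
  have hcard : #S + #T = Fintype.card V := by
    rw [← card_union_of_disjoint hST, huniv, Finset.card_univ]
  have hG : fromEdgeSet (G.edgeFinset : Set (Sym2 V)) = G := by
    rw [coe_edgeFinset, fromEdgeSet_edgeSet]
  rw [isTree_iff_connected_and_card, connected_iff, Nat.card_eq_fintype_card,
    Nat.card_eq_fintype_card, ← edgeFinset_card, ← hcard]
  constructor
  · rintro ⟨hedge, hreach, hcardE⟩
    have hV : 0 < Fintype.card V := by omega
    refine ⟨⟨⟨fun x y => ?_, Fintype.card_pos_iff.1 hV⟩, hcardE⟩,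
      fun e he => hedge e (mem_edgeFinset.2 he)⟩
    rw [← hG]
    exact hreach x (huniv ▸ mem_univ x) y (huniv ▸ mem_univ y)
  · rintro ⟨⟨⟨hpre, -⟩, hcardE⟩, hedge⟩
    refine ⟨fun e he => hedge e (mem_edgeFinset.1 he), fun x _ y _ => ?_, hcardE⟩
    rw [hG]
    exact hpre x y

theorem card_isTree_le_completeBipartiteGraph (α β : Type*) [Fintype α] [Fintype β]
    [Nonempty α] [Nonempty β] :
    Nat.card {H : SimpleGraph (α ⊕ β) // H ≤ completeBipartiteGraph α β ∧ H.IsTree} =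
      Fintype.card α ^ (Fintype.card β - 1) * Fintype.card β ^ (Fintype.card α - 1) := by
  classical
  set S : Finset (α ⊕ β) := univ.map .inl
  set T : Finset (α ⊕ β) := univ.map .inr
  have hST : Disjoint S T := disjoint_map_inl_map_inr _ _
  have huniv : S ∪ T = univ := by
    rw [← disjUnion_eq_union _ _ hST, map_inl_disjUnion_map_inr, univ_disjSum_univ]
  have hedge : ∀ H : SimpleGraph (α ⊕ β), H ≤ completeBipartiteGraph α β ∧ H.IsTree ↔
      IsTreeOn S T H.edgeFinset := fun H => by
    rw [isTreeOn_edgeFinset_iff H hST huniv, le_completeBipartiteGraph_iff, and_comm]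
    simp [S, T]
  have hcount : #{H : SimpleGraph (α ⊕ β) | H ≤ completeBipartiteGraph α β ∧ H.IsTree} =
      #{E : Finset (Sym2 (α ⊕ β)) | IsTreeOn S T E} := by
    refine card_bij' (fun H _ => H.edgeFinset) (fun E _ => fromEdgeSet E) ?_ ?_ ?_ ?_
    · intro H hH
      simpa [hedge] using hH
    · intro E hE
      simp only [mem_filter, mem_univ, true_and, hedge] at hE ⊢
      convert hE
      exact coe_injective (by rw [coe_edgeFinset, hE.edgeSet_fromEdgeSet hST])
    · intro H _
      simp only [coe_edgeFinset, fromEdgeSet_edgeSet]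
    · intro E hE
      exact coe_injective (by rw [coe_edgeFinset, (mem_filter.1 hE).2.edgeSet_fromEdgeSet hST])
  rw [Nat.card_eq_fintype_card, Fintype.card_subtype, hcount,
    card_isTreeOn hST (by simp [S]) (by simp [T])]
  simp [S, T]

end Counting

end BipartiteSpanningTree

/-- the number of spanning trees of the complete bipartite graph `K_{m,n}`
equals `m^(n−1) · n^(m−1)` for all `m, n ≥ 1`. -/
theorem spanningTrees_completeBipartite (m n : ℕ) (hm : 1 ≤ m) (hn : 1 ≤ n) :
    Nat.card {H : SimpleGraph (Fin m ⊕ Fin n) //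
        H ≤ completeBipartiteGraph (Fin m) (Fin n) ∧ H.IsTree} =
      m ^ (n - 1) * n ^ (m - 1) := by
  have : NeZero m := ⟨by omega⟩
  have : NeZero n := ⟨by omega⟩
  simpa using BipartiteSpanningTree.card_isTree_le_completeBipartiteGraph (Fin m) (Fin n)
end

section
/- Every tree T with diameter at least 3 admits a self-isomorphic graph anti-homomorphism: there exists a bijection σ : V(T) → V(T) such that for every edge uv ∈ E(T), the pair σ(u)σ(v) is not an edge of T; consequently the graph on V(T) with edge set E(T) ∪ {σ(u)σ(v) : uv ∈ E(T)} has exactly 2|E(T)| edges. -/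
/-!
Induction on the number of vertices. The ends `a`, `b` of a longest path are leaves, with
distinct neighbours `a'`, `b'`. A packing `τ` of `T - a - b` extends to `T` either by fixing
`a` and `b` or by swapping them: the first choice fails only if `τ a' = a'` or `τ b' = b'`, the
second only if `τ a' = b'` or `τ b' = a'`, and by injectivity of `τ` these cannot both happen.

If `T - a - b` has diameter at most `2`, then every edge of `T` meets a path `a a' x y` (with
`x y = b' b` when `a' ~ b'`, and `x y = m b'` for the common neighbour `m` of `a'`, `b'`
otherwise), and the `4`-cycle `a ↦ a' ↦ y ↦ x ↦ a` is a packing of `T`.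

A packing maps the edges injectively to non-edges, so `T ⊔ σ T` has twice as many edges as `T`.
-/

open Equiv

namespace SimpleGraph

variable {V : Type*} {G : SimpleGraph V}

/-- `σ` is a self-isomorphic anti-homomorphism of `G`, i.e. a packing of two copies of `G`. -/
def IsSelfPacking (G : SimpleGraph V) (σ : V ≃ V) : Prop :=
  ∀ u v, G.Adj u v → ¬ G.Adj (σ u) (σ v)

theorem IsSelfPacking.ncard_edgeSet_sup_map [Finite V] {σ : V ≃ V} (h : G.IsSelfPacking σ) :
    (G ⊔ G.map σ.toEmbedding).edgeSet.ncard = 2 * G.edgeSet.ncard := by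
  have hdisj : Disjoint G.edgeSet (G.map σ.toEmbedding).edgeSet := by
    rw [edgeSet_map, Set.disjoint_right]
    rintro _ ⟨e, he, rfl⟩
    induction e using Sym2.ind with
    | _ u v => exact h u v he
  rw [edgeSet_sup, Set.ncard_union_eq hdisj, edgeSet_map,
    Set.ncard_image_of_injective _ σ.toEmbedding.sym2Map.injective, two_mul]

theorem IsAcyclic.length_eq_dist_of_isPath (hG : G.IsAcyclic) {u v : V} {p : G.Walk u v}
    (hp : p.IsPath) : p.length = G.dist u v := by
  obtain ⟨q, hq, hql⟩ := p.reachable.exists_path_of_dist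
  have hpq : p = q := congrArg Subtype.val ((hG.subsingleton_path u v).elim ⟨p, hp⟩ ⟨q, hq⟩)
  rw [hpq, hql]

theorem IsAcyclic.dist_eq_two (hG : G.IsAcyclic) {x y z : V} (hxy : G.Adj x y) (hyz : G.Adj y z)
    (hxz : x ≠ z) : G.dist x z = 2 := by
  refine (hG.length_eq_dist_of_isPath (p := .cons hxy (.cons hyz .nil)) ?_).symm
  simp [hxy.ne, hyz.ne, hxz]

theorem IsAcyclic.dist_eq_three (hG : G.IsAcyclic) {w x y z : V} (hwx : G.Adj w x)
    (hxy : G.Adj x y) (hyz : G.Adj y z) (hwy : w ≠ y) (hxz : x ≠ z) (hwz : w ≠ z) :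
    G.dist w z = 3 := by
  refine (hG.length_eq_dist_of_isPath (p := .cons hwx (.cons hxy (.cons hyz .nil))) ?_).symm
  simp [hwx.ne, hxy.ne, hyz.ne, hwy, hxz, hwz]

theorem IsAcyclic.not_adj_of_adj_of_adj (hG : G.IsAcyclic) {x y z : V} (hxy : G.Adj x y)
    (hyz : G.Adj y z) (hxz : x ≠ z) : ¬ G.Adj x z := by
  rw [← dist_eq_one_iff_adj, hG.dist_eq_two hxy hyz hxz]
  decide

theorem IsAcyclic.not_adj_of_adj_of_adj_of_adj (hG : G.IsAcyclic) {w x y z : V}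
    (hwx : G.Adj w x) (hxy : G.Adj x y) (hyz : G.Adj y z) (hwy : w ≠ y) (hxz : x ≠ z) :
    ¬ G.Adj z w := by
  rintro hzw
  have := hG.dist_eq_three hwx hxy hyz hwy hxz hzw.ne.symm
  rw [dist_comm, dist_eq_one_iff_adj.mpr hzw] at this
  exact absurd this (by decide)

theorem IsTree.three_le_dist_of_disjoint_edges (hG : G.IsTree) {p q x y : V} (hpq : G.Adj p q)
    (hxy : G.Adj x y) (hx : x ≠ p ∧ x ≠ q) (hy : y ≠ p ∧ y ≠ q) :
    3 ≤ G.dist p x ∨ 3 ≤ G.dist p y ∨ 3 ≤ G.dist q x ∨ 3 ≤ G.dist q y := by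
  have hpx := hG.connected.pos_dist_of_ne hx.1.symm
  have hpy := hG.connected.pos_dist_of_ne hy.1.symm
  rcases hG.dist_eq_dist_add_one_of_adj p hxy with h | h
  · by_cases hpy1 : G.dist p y = 1
    · have := hG.isAcyclic.dist_eq_three hxy (dist_eq_one_iff_adj.mp hpy1).symm hpq
        hx.1 hy.2 hx.2
      rw [dist_comm] at this
      omega
    · omega
  · by_cases hpx1 : G.dist p x = 1
    · have := hG.isAcyclic.dist_eq_three hxy.symm (dist_eq_one_iff_adj.mp hpx1).symm hpq
        hy.1 hx.2 hy.2
      rw [dist_comm] at this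
      omega
    · omega

theorem IsTree.exists_isSelfPacking_of_edges_meet_path (hG : G.IsTree) {x₀ x₁ x₂ x₃ : V}
    (h₀ : ∀ y, G.Adj x₀ y ↔ y = x₁) (h₁₂ : G.Adj x₁ x₂) (h₂₃ : G.Adj x₂ x₃) (h₁₃ : x₁ ≠ x₃)
    (hmeet : ∀ u v, G.Adj u v →
      u ∈ ({x₀, x₁, x₂, x₃} : Set V) ∨ v ∈ ({x₀, x₁, x₂, x₃} : Set V)) :
    ∃ σ : V ≃ V, G.IsSelfPacking σ := by
  classical
  have hG' := hG.isAcyclic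
  have h₀₁ : x₀ ≠ x₁ := ((h₀ x₁).mpr rfl).ne
  have h₀₂ : x₀ ≠ x₂ := by rintro rfl; exact h₁₃ ((h₀ x₃).mp h₂₃).symm
  have h₀₃ : x₀ ≠ x₃ := by rintro rfl; exact h₁₂.ne ((h₀ x₂).mp h₂₃.symm).symm
  have hn₀₂ : ¬ G.Adj x₀ x₂ := fun h ↦ h₁₂.ne ((h₀ x₂).mp h).symm
  have hn₀₃ : ¬ G.Adj x₀ x₃ := fun h ↦ h₁₃ ((h₀ x₃).mp h).symm
  have hn₁₃ : ¬ G.Adj x₁ x₃ := hG'.not_adj_of_adj_of_adj h₁₂ h₂₃ h₁₃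
  set σ : V ≃ V := swap x₀ x₁ * swap x₁ x₃ * swap x₃ x₂
  have hσP : σ x₀ = x₁ ∧ σ x₁ = x₃ ∧ σ x₂ = x₀ ∧ σ x₃ = x₂ := by
    refine ⟨?_, ?_, ?_, ?_⟩ <;>
      simp [σ, swap_apply_def, h₀₁, h₀₂, h₀₃, h₁₂.ne, h₁₃, h₂₃.ne, h₀₂.symm,
        h₀₃.symm, h₁₂.ne.symm, h₁₃.symm]
  obtain ⟨hσ₀, hσ₁, hσ₂, hσ₃⟩ := hσP
  have hσ : ∀ y ∉ ({x₀, x₁, x₂, x₃} : Set V), σ y = y := by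
    intro y hy
    simp only [Set.mem_insert_iff, Set.mem_singleton_iff, not_or] at hy
    simp [σ, swap_apply_of_ne_of_ne, hy]
  have key : ∀ u v, u ∈ ({x₀, x₁, x₂, x₃} : Set V) → G.Adj u v → ¬ G.Adj (σ u) (σ v) := by
    intro u v hu huv
    by_cases hv : v ∈ ({x₀, x₁, x₂, x₃} : Set V)
    · simp only [Set.mem_insert_iff, Set.mem_singleton_iff] at hu hv
      rcases hu with rfl | rfl | rfl | rfl <;> rcases hv with rfl | rfl | rfl | rfl <;>
        simp_all [adj_comm]
    rw [hσ v hv]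
    simp only [Set.mem_insert_iff, Set.mem_singleton_iff, not_or] at hu hv
    rcases hu with rfl | rfl | rfl | rfl
    · exact absurd ((h₀ v).mp huv) hv.2.1
    · rw [hσ₁]
      exact fun h ↦
        hG'.not_adj_of_adj_of_adj_of_adj h₁₂ h₂₃ h h₁₃ (Ne.symm hv.2.2.1) huv.symm
    · rw [hσ₂, h₀]
      exact hv.2.1
    · rw [hσ₃]
      exact hG'.not_adj_of_adj_of_adj h₂₃ huv (Ne.symm hv.2.2.1)
  refine ⟨σ, fun u v huv ↦ ?_⟩
  rcases hmeet u v huv with hu | hv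
  · exact key u v hu huv
  · exact fun h ↦ key v u hv huv.symm h.symm

theorem ne_and_ne_of_adj_iff_eq {a a' b : V} (ha : ∀ x, G.Adj a x ↔ x = a')
    (hab : ¬ G.Adj a b) : a' ≠ a ∧ a' ≠ b :=
  ⟨((ha a').mpr rfl).ne.symm, fun h ↦ hab ((ha b).mpr h.symm)⟩

theorem isSelfPacking_of_pendant_pair {a a' b b' : V} (ha : ∀ x, G.Adj a x ↔ x = a')
    (hb : ∀ x, G.Adj b x ↔ x = b') {σ : V ≃ V}
    (hσ : ∀ x y, x ≠ a ∧ x ≠ b → y ≠ a ∧ y ≠ b → G.Adj x y → ¬ G.Adj (σ x) (σ y))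
    (hσa : ¬ G.Adj (σ a) (σ a')) (hσb : ¬ G.Adj (σ b) (σ b')) : G.IsSelfPacking σ := by
  intro x y hxy
  obtain rfl | rfl | ⟨hx, hy⟩ | rfl | rfl :
      x = a ∨ x = b ∨ (x ≠ a ∧ x ≠ b) ∧ (y ≠ a ∧ y ≠ b) ∨ y = a ∨ y = b := by
    tauto
  · rwa [(ha y).mp hxy]
  · rwa [(hb y).mp hxy]
  · exact hσ x y hx hy hxy
  · rw [(ha x).mp hxy.symm, adj_comm]
    exact hσa
  · rw [(hb x).mp hxy.symm, adj_comm]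
    exact hσb

theorem exists_isSelfPacking_of_induce {a a' b b' : V} (ha : ∀ x, G.Adj a x ↔ x = a')
    (hb : ∀ x, G.Adj b x ↔ x = b') (hab' : a' ≠ b') (hab : ¬ G.Adj a b)
    {σ : Perm {x | x ≠ a ∧ x ≠ b}} (hσ : (G.induce {x | x ≠ a ∧ x ≠ b}).IsSelfPacking σ) :
    ∃ τ : V ≃ V, G.IsSelfPacking τ := by
  classical
  set τ := Perm.ofSubtype σ
  have hτ : ∀ x (hx : x ≠ a ∧ x ≠ b), τ x = σ ⟨x, hx⟩ := fun x hx ↦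
    Perm.ofSubtype_apply_of_mem σ hx
  have hτa : τ a = a := Perm.ofSubtype_apply_of_not_mem σ (by simp)
  have hτb : τ b = b := Perm.ofSubtype_apply_of_not_mem σ (by simp)
  have hτS : ∀ x, x ≠ a ∧ x ≠ b → τ x ≠ a ∧ τ x ≠ b := fun x hx ↦ hτ x hx ▸ (σ ⟨x, hx⟩).2
  have hpack : ∀ π : V ≃ V, (∀ x, x ≠ a ∧ x ≠ b → π x = τ x) →
      ∀ x y, x ≠ a ∧ x ≠ b → y ≠ a ∧ y ≠ b → G.Adj x y → ¬ G.Adj (π x) (π y) := by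
    intro π hπ x y hx hy hxy
    rw [hπ x hx, hπ y hy, hτ x hx, hτ y hy]
    exact hσ ⟨x, hx⟩ ⟨y, hy⟩ hxy
  have hτ' : τ a' ≠ τ b' := τ.injective.ne hab'
  by_cases h : τ a' = b' ∨ τ b' = a'
  · refine ⟨τ, isSelfPacking_of_pendant_pair ha hb (hpack τ fun _ _ ↦ rfl) ?_ ?_⟩
    · rw [hτa, ha]
      rintro h'
      rcases h with h | h
      · exact hab' (h' ▸ h)
      · exact hτ' (h'.trans h.symm)
    · rw [hτb, hb]
      rintro h'
      rcases h with h | h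
      · exact hτ' (h.trans h'.symm)
      · exact hab' (h' ▸ h).symm
  · obtain ⟨hca, hdb⟩ := not_or.mp h
    have ha'S := ne_and_ne_of_adj_iff_eq ha hab
    have hb'S := (ne_and_ne_of_adj_iff_eq hb fun h ↦ hab h.symm).symm
    have hswap : ∀ x, x ≠ a ∧ x ≠ b → (τ.trans (swap a b)) x = τ x := fun x hx ↦
      swap_apply_of_ne_of_ne (hτS x hx).1 (hτS x hx).2
    refine ⟨τ.trans (swap a b), isSelfPacking_of_pendant_pair ha hb (hpack _ hswap) ?_ ?_⟩
    · rw [hswap a' ha'S, trans_apply, hτa, swap_apply_left, hb]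
      exact hca
    · rw [hswap b' hb'S, trans_apply, hτb, swap_apply_right, ha]
      exact hdb

theorem IsTree.induce_of_subsingleton_neighborSet (hG : G.IsTree) {s : Set V}
    (hs : ∀ v ∉ s, (G.neighborSet v).Subsingleton) (hne : s.Nonempty) : (G.induce s).IsTree :=
  have := hne.to_subtype
  ⟨⟨hG.preconnected.induce_of_degree_eq_one hs⟩, hG.isAcyclic.induce s⟩

theorem dist_le_dist_induce {s : Set V} {x y : s} (h : (G.induce s).Reachable x y) :
    G.dist x y ≤ (G.induce s).dist x y := by
  obtain ⟨p, hp⟩ := h.exists_walk_length_eq_dist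
  calc G.dist x y ≤ (p.map (Embedding.induce s).toHom).length := dist_le _
    _ = (G.induce s).dist x y := by rw [Walk.length_map, hp]

theorem IsAcyclic.adj_iff_eq_snd_of_longest (hG : G.IsAcyclic) {a b : V} {p : G.Walk a b}
    (hp : p.IsPath) (hnil : ¬ p.Nil)
    (hmax : ∀ u v (q : G.Walk u v), q.IsPath → q.length ≤ p.length) (x : V) :
    G.Adj a x ↔ x = p.snd := by
  refine ⟨fun h ↦ hG.eq_snd_of_adj_start hp h ?_, fun h ↦ h ▸ p.adj_snd hnil⟩
  by_contra hx
  simpa using hmax _ _ _ (hp.cons hx (h := h.symm))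

theorem IsTree.exists_pendant_pair [Finite V] (hG : G.IsTree) (hdiam : ∃ u v, 3 ≤ G.dist u v) :
    ∃ a a' b b', (∀ x, G.Adj a x ↔ x = a') ∧ (∀ x, G.Adj b x ↔ x = b') ∧ a' ≠ b' ∧
      ¬ G.Adj a b := by
  have := hG.connected.nonempty
  obtain ⟨a, b, p, hp, hmax⟩ := Walk.exists_isPath_forall_isPath_length_le_length G
  obtain ⟨u, v, huv⟩ := hdiam
  obtain ⟨q, hq, hql⟩ := hG.connected.exists_path_of_dist u v
  have hab : 3 ≤ G.dist a b := by
    rw [← hG.isAcyclic.length_eq_dist_of_isPath hp]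
    exact (huv.trans hql.ge).trans (hmax _ _ q hq)
  have hnil : ¬ p.Nil := fun h ↦ by simp [h.eq] at hab
  have ha := hG.isAcyclic.adj_iff_eq_snd_of_longest hp hnil hmax
  have hb := hG.isAcyclic.adj_iff_eq_snd_of_longest hp.reverse (by simpa using hnil)
    (by simpa using hmax)
  refine ⟨a, p.snd, b, p.reverse.snd, ha, hb, fun h ↦ ?_, fun h ↦ ?_⟩
  · have := hG.connected.dist_triangle (u := a) (v := p.snd) (w := b)
    rw [dist_eq_one_iff_adj.mpr ((ha _).mpr rfl), h, dist_comm (u := p.reverse.snd),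
      dist_eq_one_iff_adj.mpr ((hb _).mpr rfl)] at this
    omega
  · rw [← dist_eq_one_iff_adj] at h
    omega

theorem IsTree.exists_isSelfPacking_of_dist_le_two (hG : G.IsTree) {a a' b b' : V}
    (ha : ∀ x, G.Adj a x ↔ x = a') (hb : ∀ x, G.Adj b x ↔ x = b') (ha'b' : a' ≠ b')
    (hab : ¬ G.Adj a b) (h2 : ∀ x y, x ≠ a ∧ x ≠ b → y ≠ a ∧ y ≠ b → G.dist x y ≤ 2) :
    ∃ σ : V ≃ V, G.IsSelfPacking σ := by
  have ha' := ne_and_ne_of_adj_iff_eq ha hab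
  have hb' := (ne_and_ne_of_adj_iff_eq hb fun h ↦ hab h.symm).symm
  by_cases ha'b'_adj : G.Adj a' b'
  · refine hG.exists_isSelfPacking_of_edges_meet_path ha ha'b'_adj ((hb b').mpr rfl).symm ha'.2
      fun u v huv ↦ ?_
    by_contra! h
    simp only [Set.mem_insert_iff, Set.mem_singleton_iff, not_or] at h
    obtain ⟨⟨hua, hua', hub', hub⟩, hva, hva', hvb', hvb⟩ := h
    have := h2 a' u ha' ⟨hua, hub⟩
    have := h2 a' v ha' ⟨hva, hvb⟩
    have := h2 b' u hb' ⟨hua, hub⟩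
    have := h2 b' v hb' ⟨hva, hvb⟩
    have := hG.three_le_dist_of_disjoint_edges ha'b'_adj huv ⟨hua', hub'⟩ ⟨hva', hvb'⟩
    omega
  · have hdist : G.dist a' b' = 2 := by
      have := h2 a' b' ha' hb'
      have := hG.connected.pos_dist_of_ne ha'b'
      have := (dist_eq_one_iff_adj (G := G)).not.mpr ha'b'_adj
      omega
    obtain ⟨m, hm⟩ := (edist_eq_two_iff.mp (by
      rw [← (hG.connected a' b').coe_dist_eq_edist, hdist]; rfl)).2.2
    obtain ⟨ha'm, hb'm⟩ := (mem_commonNeighbors (G := G)).mp hm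
    have hm' : m ≠ a ∧ m ≠ b := ⟨fun h ↦ ha'b' ((ha b').mp (h ▸ hb'm.symm)).symm,
      fun h ↦ ha'b' ((hb a').mp (h ▸ ha'm.symm))⟩
    refine hG.exists_isSelfPacking_of_edges_meet_path ha ha'm hb'm.symm ha'b' fun u v huv ↦ ?_
    by_contra! h
    simp only [Set.mem_insert_iff, Set.mem_singleton_iff, not_or] at h
    obtain ⟨⟨hua, hua', hum, hub'⟩, hva, hva', hvm, hvb'⟩ := h
    have hub : u ≠ b := fun h ↦ hvb' ((hb v).mp (h ▸ huv))
    have hvb : v ≠ b := fun h ↦ hub' ((hb u).mp (h ▸ huv.symm))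
    have := h2 a' u ha' ⟨hua, hub⟩
    have := h2 a' v ha' ⟨hva, hvb⟩
    have := h2 m u hm' ⟨hua, hub⟩
    have := h2 m v hm' ⟨hva, hvb⟩
    have := hG.three_le_dist_of_disjoint_edges ha'm huv ⟨hua', hum⟩ ⟨hva', hvm⟩
    omega

theorem IsTree.exists_isSelfPacking [Finite V] (hG : G.IsTree) (hdiam : ∃ u v, 3 ≤ G.dist u v) :
    ∃ σ : V ≃ V, G.IsSelfPacking σ := by
  induction hn : Nat.card V using Nat.strong_induction_on generalizing V with
  | _ n ih =>
  obtain ⟨a, a', b, b', ha, hb, ha'b', hab⟩ := hG.exists_pendant_pair hdiam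
  have hS : (G.induce {x | x ≠ a ∧ x ≠ b}).IsTree := by
    refine hG.induce_of_subsingleton_neighborSet (fun v hv ↦ ?_)
      ⟨a', ne_and_ne_of_adj_iff_eq ha hab⟩
    obtain rfl | rfl : v = a ∨ v = b := by simpa [or_iff_not_imp_left] using hv
    · exact fun x hx y hy ↦ ((ha x).mp hx).trans ((ha y).mp hy).symm
    · exact fun x hx y hy ↦ ((hb x).mp hx).trans ((hb y).mp hy).symm
  by_cases hS3 : ∃ u v, 3 ≤ (G.induce {x | x ≠ a ∧ x ≠ b}).dist u v
  · obtain ⟨σ, hσ⟩ := ih _ (hn ▸ Finite.card_subtype_lt (x := a) (by simp)) hS hS3 rfl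
    exact exists_isSelfPacking_of_induce ha hb ha'b' hab hσ
  · refine hG.exists_isSelfPacking_of_dist_le_two ha hb ha'b' hab fun x y hx hy ↦ ?_
    push Not at hS3
    exact (dist_le_dist_induce (hS.connected ⟨x, hx⟩ ⟨y, hy⟩)).trans
      (Nat.le_of_lt_succ (hS3 _ _))

end SimpleGraph

/-- every finite tree `T` of diameter at least `3` admits a self-isomorphic
graph anti-homomorphism: a bijection `σ : V(T) → V(T)` such that `σ(u)σ(v)` is never an
edge of `T` for any edge `uv`; consequently the graph with edge set
`E(T) ∪ {σ(u)σ(v) : uv ∈ E(T)}` has exactly `2|E(T)|` edges. -/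
theorem tree_self_isomorphic_anti_homomorphism {V : Type*} [Fintype V]
    (T : SimpleGraph V) (hT : T.IsTree) (hdiam : ∃ u v : V, 3 ≤ T.dist u v) :
    ∃ σ : V ≃ V,
      (∀ u v, T.Adj u v → ¬ T.Adj (σ u) (σ v)) ∧
      (T ⊔ T.map σ.toEmbedding).edgeSet.ncard = 2 * T.edgeSet.ncard := by
  obtain ⟨σ, hσ⟩ := hT.exists_isSelfPacking hdiam
  exact ⟨σ, hσ, hσ.ncard_edgeSet_sup_map⟩
end
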